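/- arXiv:2205.07848 — 7 statements merged into one kernel-verified Lean document; each statement's English description precedes it below -/
import Mathlib

section
/- Let U = R_Y(θ₀) · ∏_{j=1}^{L} R_Z(x) R_Y(θ_j) be a product of single-qubit rotations, where R_Z(x) = diag(e^{-ix/2}, e^{ix/2}) and R_Y(θ) = [[cos(θ/2), -sin(θ/2)], [sin(θ/2), cos(θ/2)]]. Then U has the form [[P(x), -Q(x)], [Q*(x), P*(x)]] where P and Q are Laurent polynomials in e^{ix/2} with real coefficients, deg(P) ≤ L, deg(Q) ≤ L, and both P and Q have parity L mod 2 (only powers of e^{ix/2} congruent to L mod 2 have nonzero coefficients). -/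
/-!
Induction on `L`. Right multiplication by `R_Z(x) R_Y(θ)` preserves the shape
`[[P, -Q], [Q*, P*]]`, sending `(P, Q)` to `(c z⁻¹ P - s z Q, s z⁻¹ P + c z Q)` with
`z = e^{ix/2}`, `c = cos(θ/2)`, `s = sin(θ/2)`. Multiplication by `z^{±1}` shifts coefficients
by one, so the degree bound grows by one and the parity flips, while the coefficients stay real.
-/

open Complex Matrix

noncomputable def RZ (x : ℝ) : Matrix (Fin 2) (Fin 2) ℂ :=
  !![Complex.exp (-(Complex.I * x) / 2), 0; 0, Complex.exp (Complex.I * x / 2)]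

noncomputable def RY (θ : ℝ) : Matrix (Fin 2) (Fin 2) ℂ :=
  !![(Real.cos (θ / 2) : ℂ), -(Real.sin (θ / 2) : ℂ);
     (Real.sin (θ / 2) : ℂ), (Real.cos (θ / 2) : ℂ)]

structure HasDegreeParity (L : ℕ) (p : ℤ → ℝ) : Prop where
  degree_le : ∀ n : ℤ, (L : ℤ) < |n| → p n = 0
  parity : ∀ n : ℤ, n % 2 ≠ (L : ℤ) % 2 → p n = 0

namespace HasDegreeParity

lemma single_zero (a : ℝ) : HasDegreeParity 0 (fun n => if n = 0 then a else 0) where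
  degree_le n hn := if_neg (by rintro rfl; simp at hn)
  parity n hn := if_neg (by rintro rfl; simp at hn)

lemma shift_combination {L : ℕ} {p q : ℤ → ℝ} (hp : HasDegreeParity L p)
    (hq : HasDegreeParity L q) (a b : ℝ) :
    HasDegreeParity (L + 1) (fun n => a * p (n + 1) + b * q (n - 1)) where
  degree_le n hn := by
    push_cast at hn
    rw [hp.degree_le (n + 1) (by grind), hq.degree_le (n - 1) (by grind)]
    ring
  parity n hn := by
    push_cast at hn
    rw [hp.parity (n + 1) (by omega), hq.parity (n - 1) (by omega)]
    ring

end HasDegreeParity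

noncomputable def laurentSum (L : ℕ) (p : ℤ → ℝ) (x : ℝ) : ℂ :=
  ∑ n ∈ Finset.Icc (-(L : ℤ)) (L : ℤ), (p n : ℂ) * cexp (I * (n : ℂ) * (x : ℂ) / 2)

lemma laurentSum_mul_add_mul (L : ℕ) (a b : ℝ) (p q : ℤ → ℝ) (x : ℝ) :
    laurentSum L (fun n => a * p n + b * q n) x = a * laurentSum L p x + b * laurentSum L q x := by
  simp only [laurentSum, Finset.mul_sum, ← Finset.sum_add_distrib]
  refine Finset.sum_congr rfl fun n _ => ?_
  push_cast
  ring

lemma laurentSum_shift {L M : ℕ} {p : ℤ → ℝ} (hp : ∀ n : ℤ, (L : ℤ) < |n| → p n = 0)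
    {k : ℤ} (hk : (L : ℤ) + |k| ≤ M) (x : ℝ) :
    laurentSum M (fun n => p (n + k)) x = cexp (-(I * k * x) / 2) * laurentSum L p x := by
  have hsub : Finset.Icc (-(L : ℤ) - k) (L - k) ⊆ Finset.Icc (-(M : ℤ)) M := by
    intro n hn
    simp only [Finset.mem_Icc] at *
    grind
  rw [laurentSum, ← Finset.sum_subset hsub fun n _ hn => ?_]
  · rw [laurentSum, Finset.mul_sum, sub_eq_add_neg, sub_eq_add_neg, ← Finset.map_add_right_Icc,
      Finset.sum_map]
    refine Finset.sum_congr rfl fun n _ => ?_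
    rw [addRightEmbedding_apply, neg_add_cancel_right, mul_left_comm, ← Complex.exp_add]
    push_cast
    ring_nf
  · simp only [Finset.mem_Icc, not_and_or, not_le] at hn
    rw [hp (n + k) (by grind), Complex.ofReal_zero, zero_mul]

noncomputable def qspMatrix (P Q : ℂ) : Matrix (Fin 2) (Fin 2) ℂ :=
  !![P, -Q; starRingEnd ℂ Q, starRingEnd ℂ P]

lemma qspMatrix_mul_RZ_mul_RY (P Q : ℂ) (x θ : ℝ) :
    qspMatrix P Q * (RZ x * RY θ) =
      qspMatrix
        (Real.cos (θ / 2) * (cexp (-(I * x) / 2) * P) -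
          Real.sin (θ / 2) * (cexp (I * x / 2) * Q))
        (Real.sin (θ / 2) * (cexp (-(I * x) / 2) * P) +
          Real.cos (θ / 2) * (cexp (I * x / 2) * Q)) := by
  have hconj : starRingEnd ℂ (cexp (I * x / 2)) = cexp (-(I * x) / 2) := by
    rw [← Complex.exp_conj]
    simp [map_ofNat, neg_div]
  have hconj_neg : starRingEnd ℂ (cexp (-(I * x) / 2)) = cexp (I * x / 2) := by
    rw [← hconj, Complex.conj_conj]
  ext i j
  fin_cases i <;> fin_cases j <;>
    simp [qspMatrix, RZ, RY, hconj, hconj_neg, -Complex.ofReal_cos, -Complex.ofReal_sin,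
      Complex.conj_ofReal] <;> ring

def HasLaurentForm (L : ℕ) (U : ℝ → Matrix (Fin 2) (Fin 2) ℂ) : Prop :=
  ∃ p q : ℤ → ℝ, HasDegreeParity L p ∧ HasDegreeParity L q ∧
    ∀ x, U x = qspMatrix (laurentSum L p x) (laurentSum L q x)

lemma hasLaurentForm_RY (θ : ℝ) : HasLaurentForm 0 fun _ => RY θ := by
  refine ⟨fun n => if n = 0 then Real.cos (θ / 2) else 0,
    fun n => if n = 0 then Real.sin (θ / 2) else 0,
    .single_zero _, .single_zero _, fun x => ?_⟩
  ext i j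
  fin_cases i <;> fin_cases j <;>
    simp [RY, qspMatrix, laurentSum, -Complex.ofReal_cos, -Complex.ofReal_sin, Complex.conj_ofReal]

lemma HasLaurentForm.mul_RZ_mul_RY {L : ℕ} {U : ℝ → Matrix (Fin 2) (Fin 2) ℂ}
    (hU : HasLaurentForm L U) (θ : ℝ) :
    HasLaurentForm (L + 1) fun x => U x * (RZ x * RY θ) := by
  obtain ⟨p, q, hp, hq, hU⟩ := hU
  set c := Real.cos (θ / 2)
  set s := Real.sin (θ / 2)
  refine ⟨fun n => c * p (n + 1) + -s * q (n - 1), fun n => s * p (n + 1) + c * q (n - 1),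
    hp.shift_combination hq _ _, hp.shift_combination hq _ _, fun x => ?_⟩
  have hp_shift : laurentSum (L + 1) (fun n => p (n + 1)) x =
      cexp (-(I * x) / 2) * laurentSum L p x := by
    simpa using laurentSum_shift hp.degree_le (k := 1) (by simp) x
  have hq_shift : laurentSum (L + 1) (fun n => q (n - 1)) x =
      cexp (I * x / 2) * laurentSum L q x := by
    simpa [sub_eq_add_neg] using laurentSum_shift hq.degree_le (k := -1) (M := L + 1) (by simp) x
  dsimp only
  rw [hU, qspMatrix_mul_RZ_mul_RY, laurentSum_mul_add_mul, laurentSum_mul_add_mul, hp_shift,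
    hq_shift, Complex.ofReal_neg, neg_mul, ← sub_eq_add_neg]

lemma hasLaurentForm_prod (L : ℕ) (θ : Fin (L + 1) → ℝ) :
    HasLaurentForm L fun x =>
      RY (θ 0) * (List.ofFn fun j : Fin L => RZ x * RY (θ j.succ)).prod := by
  induction L with
  | zero => simpa using hasLaurentForm_RY (θ 0)
  | succ L ih =>
    convert (ih (θ ∘ Fin.castSucc)).mul_RZ_mul_RY (θ (Fin.last _)) using 2 with x
    rw [List.ofFn_succ', List.prod_concat, ← mul_assoc]
    rfl

/-- the QNN `U = R_Y(θ₀) ∏_{j=1}^L R_Z(x) R_Y(θ_j)` has the form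
`[[P, -Q],[Q*, P*]]` where `P, Q` are real-coefficient Laurent polynomials in `e^{ix/2}`
of degree at most `L` and parity `L mod 2`. -/
theorem stmt0 (L : ℕ) (θ : Fin (L + 1) → ℝ) :
    ∃ p q : ℤ → ℝ,
      (∀ n : ℤ, (L : ℤ) < |n| → p n = 0) ∧
      (∀ n : ℤ, (L : ℤ) < |n| → q n = 0) ∧
      (∀ n : ℤ, n % 2 ≠ (L : ℤ) % 2 → p n = 0) ∧
      (∀ n : ℤ, n % 2 ≠ (L : ℤ) % 2 → q n = 0) ∧
      (∀ x : ℝ,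
        RY (θ 0) * (List.ofFn fun j : Fin L => RZ x * RY (θ j.succ)).prod =
        !![(∑ n ∈ Finset.Icc (-(L : ℤ)) (L : ℤ),
              (p n : ℂ) * Complex.exp (Complex.I * (n : ℂ) * (x : ℂ) / 2)),
           -(∑ n ∈ Finset.Icc (-(L : ℤ)) (L : ℤ),
              (q n : ℂ) * Complex.exp (Complex.I * (n : ℂ) * (x : ℂ) / 2));
           (starRingEnd ℂ) (∑ n ∈ Finset.Icc (-(L : ℤ)) (L : ℤ),
              (q n : ℂ) * Complex.exp (Complex.I * (n : ℂ) * (x : ℂ) / 2)),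
           (starRingEnd ℂ) (∑ n ∈ Finset.Icc (-(L : ℤ)) (L : ℤ),
              (p n : ℂ) * Complex.exp (Complex.I * (n : ℂ) * (x : ℂ) / 2))]) := by
  obtain ⟨p, q, hp, hq, hU⟩ := hasLaurentForm_prod L θ
  exact ⟨p, q, hp.degree_le, hq.degree_le, hp.parity, hq.parity, hU⟩
end

section
/- Let U = R_Z(φ) W(θ₀, φ₀) · ∏_{j=1}^{L} R_Z(x) W(θ_j, φ_j), where W(θ, φ) = R_Y(θ) R_Z(φ). Then U has the form [[P(x), -Q(x)], [Q*(x), P*(x)]] where P and Q are Laurent polynomials in e^{ix/2} with complex coefficients satisfying deg(P) ≤ L, deg(Q) ≤ L, both have parity L mod 2, and |P(x)|² + |Q(x)|² = 1 for all real x. -/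
/-!
Every factor `R_Z(x) W(θ, φ)` has the shape `[[a, -b], [b*, a*]]` with `a, b` equal to `e^{-ix/2}`
times constants, and matrices of this shape are closed under multiplication. Multiplying
`[[P, -Q], [Q*, P*]]` on the right by such a factor replaces `P, Q` by combinations of
`e^{-ix/2} P` and `e^{ix/2} Q`, which raises the degree bound by one and flips the parity.
Unitarity `|P|² + |Q|² = 1` is the determinant of `U`, since every factor has determinant one.
-/

open Complex Matrix

noncomputable def W (θ φ : ℝ) : Matrix (Fin 2) (Fin 2) ℂ := RY θ * RZ φ

open ComplexConjugate

noncomputable def halfAngleSum (L : ℕ) (p : ℤ → ℂ) (x : ℝ) : ℂ :=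
  ∑ n ∈ Finset.Icc (-(L : ℤ)) (L : ℤ), p n * Complex.exp (I * (n : ℂ) * (x : ℂ) / 2)

def IsHalfAngleCoeff (L : ℕ) (p : ℤ → ℂ) : Prop :=
  (∀ n : ℤ, (L : ℤ) < |n| → p n = 0) ∧ (∀ n : ℤ, n % 2 ≠ (L : ℤ) % 2 → p n = 0)

/-- Laurent polynomials in `e^{ix/2}` of degree at most `L` whose exponents all have the
parity of `L`. -/
noncomputable def halfAngleLaurent (L : ℕ) : Submodule ℂ (ℝ → ℂ) where
  carrier := {f | ∃ p, IsHalfAngleCoeff L p ∧ f = halfAngleSum L p}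
  zero_mem' := ⟨0, ⟨fun _ _ => rfl, fun _ _ => rfl⟩, by ext; simp [halfAngleSum]⟩
  add_mem' := by
    rintro _ _ ⟨p, hp, rfl⟩ ⟨q, hq, rfl⟩
    refine ⟨p + q, ⟨fun n hn => ?_, fun n hn => ?_⟩, ?_⟩
    · simp [hp.1 n hn, hq.1 n hn]
    · simp [hp.2 n hn, hq.2 n hn]
    · ext x; simp [halfAngleSum, add_mul, Finset.sum_add_distrib]
  smul_mem' := by
    rintro c _ ⟨p, hp, rfl⟩
    refine ⟨c • p, ⟨fun n hn => ?_, fun n hn => ?_⟩, ?_⟩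
    · simp [hp.1 n hn]
    · simp [hp.2 n hn]
    · ext x; simp [halfAngleSum, Finset.mul_sum, mul_assoc]

namespace halfAngleLaurent

theorem const_mem_zero (c : ℂ) : (fun _ : ℝ => c) ∈ halfAngleLaurent 0 := by
  refine ⟨fun n => if n = 0 then c else 0, ⟨fun n hn => ?_, fun n hn => ?_⟩, ?_⟩
  · simp_all
  · simp only [ite_eq_right_iff]; omega
  · ext x; simp [halfAngleSum]

theorem exp_mul_mem_succ {L : ℕ} {f : ℝ → ℂ} (hf : f ∈ halfAngleLaurent L) {k : ℤ}
    (hk : k = 1 ∨ k = -1) :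
    (fun x : ℝ => Complex.exp (I * k * x / 2) * f x) ∈ halfAngleLaurent (L + 1) := by
  obtain ⟨p, hp, rfl⟩ := hf
  refine ⟨fun n => p (n - k), ⟨fun n hn => hp.1 _ ?_, fun n hn => hp.2 _ ?_⟩, ?_⟩
  · rw [lt_abs] at hn ⊢; push_cast at hn; omega
  · push_cast at hn; omega
  · ext x
    have hsub :
        Finset.Icc (-(L : ℤ) + k) (L + k) ⊆ Finset.Icc (-((L + 1 : ℕ) : ℤ)) (L + 1 : ℕ) :=
      Finset.Icc_subset_Icc (by omega) (by omega)
    rw [halfAngleSum, halfAngleSum, Finset.mul_sum, ← Finset.sum_subset hsub,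
      ← Finset.map_add_right_Icc, Finset.sum_map]
    · refine Finset.sum_congr rfl fun n _ => ?_
      simp only [addRightEmbedding_apply, add_sub_cancel_right]
      rw [mul_left_comm, ← Complex.exp_add]; push_cast; ring_nf
    · intro n _ hn
      rw [hp.1 (n - k) (by simp only [Finset.mem_Icc] at hn; rw [lt_abs]; omega), zero_mul]

end halfAngleLaurent

def su2Mat (a b : ℂ) : Matrix (Fin 2) (Fin 2) ℂ := !![a, -b; conj b, conj a]

theorem su2Mat_mul_su2Mat (a b c d : ℂ) :
    su2Mat a b * su2Mat c d = su2Mat (a * c - b * conj d) (a * d + b * conj c) := by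
  ext i j; fin_cases i <;> fin_cases j <;> simp [su2Mat] <;> ring

theorem det_su2Mat (a b : ℂ) : (su2Mat a b).det = ((‖a‖ ^ 2 + ‖b‖ ^ 2 : ℝ) : ℂ) := by
  simp only [su2Mat, det_fin_two_of, Complex.sq_norm, ofReal_add, ← mul_conj]
  ring

theorem conj_exp_neg_I_mul_div_two (x : ℝ) :
    conj (Complex.exp (-(I * x) / 2)) = Complex.exp (I * x / 2) := by
  rw [← Complex.exp_conj]; congr 1; simp [map_div₀, map_ofNat]

theorem RZ_eq_su2Mat (x : ℝ) : RZ x = su2Mat (Complex.exp (-(I * x) / 2)) 0 := by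
  simp [RZ, su2Mat, conj_exp_neg_I_mul_div_two]

theorem RY_eq_su2Mat (θ : ℝ) : RY θ = su2Mat (Real.cos (θ / 2)) (Real.sin (θ / 2)) := by
  simp only [RY, su2Mat, conj_ofReal]

theorem RZ_mul_W (x θ φ : ℝ) :
    RZ x * W θ φ =
      su2Mat (Complex.exp (-(I * x) / 2) * (Real.cos (θ / 2) * Complex.exp (-(I * φ) / 2)))
        (Complex.exp (-(I * x) / 2) *
          (Real.sin (θ / 2) * conj (Complex.exp (-(I * φ) / 2)))) := by
  rw [W, RZ_eq_su2Mat, RY_eq_su2Mat, RZ_eq_su2Mat, su2Mat_mul_su2Mat, su2Mat_mul_su2Mat]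
  simp

theorem det_RZ_mul_W (x θ φ : ℝ) : (RZ x * W θ φ).det = 1 := by
  have norm_exp_I_mul (t : ℝ) : ‖Complex.exp (-(I * t) / 2)‖ = 1 := by
    simp [Complex.norm_exp]
  rw [RZ_mul_W, det_su2Mat, ofReal_eq_one]
  simp only [norm_mul, Complex.norm_conj, norm_exp_I_mul, one_mul, mul_one, Complex.norm_real,
    Real.norm_eq_abs, sq_abs, Real.cos_sq_add_sin_sq]

theorem det_prod_RZ_mul_W {L : ℕ} (x : ℝ) (θ φ : Fin L → ℝ) :
    (List.ofFn fun j => RZ x * W (θ j) (φ j)).prod.det = 1 :=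
  List.prod_induction (fun M : Matrix (Fin 2) (Fin 2) ℂ => M.det = 1)
    (fun M N hM hN => by rw [det_mul, hM, hN, mul_one]) det_one
    (by simp only [List.mem_ofFn]; rintro _ ⟨j, rfl⟩; exact det_RZ_mul_W ..)

theorem exists_su2Mat_mul_prod_RZ_mul_W (L : ℕ) (a b : ℂ) (θ φ : Fin L → ℝ) :
    ∃ P ∈ halfAngleLaurent L, ∃ Q ∈ halfAngleLaurent L, ∀ x : ℝ,
      su2Mat a b * (List.ofFn fun j => RZ x * W (θ j) (φ j)).prod = su2Mat (P x) (Q x) := by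
  induction L with
  | zero =>
    exact ⟨_, halfAngleLaurent.const_mem_zero a, _, halfAngleLaurent.const_mem_zero b,
      fun x => by simp⟩
  | succ L ih =>
    obtain ⟨P, hP, Q, hQ, hPQ⟩ := ih (fun j => θ j.castSucc) (fun j => φ j.castSucc)
    obtain ⟨α, β, hlast⟩ : ∃ α β : ℂ, ∀ x : ℝ,
        RZ x * W (θ (Fin.last L)) (φ (Fin.last L)) =
          su2Mat (Complex.exp (-(I * x) / 2) * α) (Complex.exp (-(I * x) / 2) * β) :=
      ⟨_, _, fun x => RZ_mul_W x _ _⟩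
    have hmul_exp (f) (hf : f ∈ halfAngleLaurent L) :
        (fun x : ℝ => Complex.exp (-(I * x) / 2) * f x) ∈ halfAngleLaurent (L + 1) := by
      convert halfAngleLaurent.exp_mul_mem_succ hf (Or.inr rfl) using 4; push_cast; ring
    have hmul_conj_exp (f) (hf : f ∈ halfAngleLaurent L) :
        (fun x : ℝ => conj (Complex.exp (-(I * x) / 2)) * f x) ∈
          halfAngleLaurent (L + 1) := by
      convert halfAngleLaurent.exp_mul_mem_succ hf (Or.inl rfl) using 3
      rw [conj_exp_neg_I_mul_div_two]; push_cast; ring_nf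
    refine ⟨α • (fun x : ℝ => Complex.exp (-(I * x) / 2) * P x) -
        conj β • (fun x : ℝ => conj (Complex.exp (-(I * x) / 2)) * Q x),
      sub_mem (Submodule.smul_mem _ _ (hmul_exp P hP)) (Submodule.smul_mem _ _ (hmul_conj_exp Q hQ)),
      β • (fun x : ℝ => Complex.exp (-(I * x) / 2) * P x) +
        conj α • (fun x : ℝ => conj (Complex.exp (-(I * x) / 2)) * Q x),
      add_mem (Submodule.smul_mem _ _ (hmul_exp P hP)) (Submodule.smul_mem _ _ (hmul_conj_exp Q hQ)),
      fun x => ?_⟩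
    rw [List.ofFn_succ', List.prod_concat, ← mul_assoc, hPQ, hlast, su2Mat_mul_su2Mat]
    congr 1 <;> simp only [Pi.sub_apply, Pi.add_apply, Pi.smul_apply, smul_eq_mul, map_mul] <;> ring

/-- the QNN `U = R_Z(φ) W(θ₀,φ₀) ∏_{j=1}^L R_Z(x) W(θ_j,φ_j)` has the form
`[[P, -Q],[Q*, P*]]` where `P, Q` are complex-coefficient Laurent polynomials in `e^{ix/2}`
of degree at most `L`, parity `L mod 2`, with `|P|² + |Q|² = 1` on ℝ. -/
theorem stmt2 (L : ℕ) (φbar : ℝ) (θ φ : Fin (L + 1) → ℝ) :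
    ∃ p q : ℤ → ℂ,
      (∀ n : ℤ, (L : ℤ) < |n| → p n = 0) ∧
      (∀ n : ℤ, (L : ℤ) < |n| → q n = 0) ∧
      (∀ n : ℤ, n % 2 ≠ (L : ℤ) % 2 → p n = 0) ∧
      (∀ n : ℤ, n % 2 ≠ (L : ℤ) % 2 → q n = 0) ∧
      (∀ x : ℝ,
        ‖∑ n ∈ Finset.Icc (-(L : ℤ)) (L : ℤ),
            p n * Complex.exp (Complex.I * (n : ℂ) * (x : ℂ) / 2)‖ ^ 2 +
        ‖∑ n ∈ Finset.Icc (-(L : ℤ)) (L : ℤ),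
            q n * Complex.exp (Complex.I * (n : ℂ) * (x : ℂ) / 2)‖ ^ 2 = 1) ∧
      (∀ x : ℝ,
        RZ φbar * W (θ 0) (φ 0) *
            (List.ofFn fun j : Fin L => RZ x * W (θ j.succ) (φ j.succ)).prod =
        !![(∑ n ∈ Finset.Icc (-(L : ℤ)) (L : ℤ),
              p n * Complex.exp (Complex.I * (n : ℂ) * (x : ℂ) / 2)),
           -(∑ n ∈ Finset.Icc (-(L : ℤ)) (L : ℤ),
              q n * Complex.exp (Complex.I * (n : ℂ) * (x : ℂ) / 2));
           (starRingEnd ℂ) (∑ n ∈ Finset.Icc (-(L : ℤ)) (L : ℤ),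
              q n * Complex.exp (Complex.I * (n : ℂ) * (x : ℂ) / 2)),
           (starRingEnd ℂ) (∑ n ∈ Finset.Icc (-(L : ℤ)) (L : ℤ),
              p n * Complex.exp (Complex.I * (n : ℂ) * (x : ℂ) / 2))]) := by
  obtain ⟨a, b, hfirst⟩ : ∃ a b, RZ φbar * W (θ 0) (φ 0) = su2Mat a b :=
    ⟨_, _, RZ_mul_W ..⟩
  obtain ⟨P, ⟨p, hp, rfl⟩, Q, ⟨q, hq, rfl⟩, hU⟩ :=
    exists_su2Mat_mul_prod_RZ_mul_W L a b (fun j => θ j.succ) (fun j => φ j.succ)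
  rw [← hfirst] at hU
  refine ⟨p, q, hp.1, hq.1, hp.2, hq.2, fun x => ?_, hU⟩
  have hdet : (su2Mat (halfAngleSum L p x) (halfAngleSum L q x)).det = 1 := by
    rw [← hU x, det_mul, det_RZ_mul_W, det_prod_RZ_mul_W, one_mul]
  rw [det_su2Mat] at hdet
  exact_mod_cast hdet
end

section
/- Let p_d, p_{-d}, q_d, q_{-d} be complex numbers, not all four zero, such that p_d · conj(p_{-d}) + q_d · conj(q_{-d}) = 0, and such that (p_d, q_d) ≠ (0,0) or (p_{-d}, q_{-d}) ≠ (0,0). Then there exist real numbers θ and φ such that cos(θ/2) e^{iφ/2} p_d + sin(θ/2) e^{-iφ/2} q_d = 0 and -sin(θ/2) e^{iφ/2} p_{-d} + cos(θ/2) e^{-iφ/2} q_{-d} = 0 hold simultaneously. -/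
/-! With `a = cos (θ/2) e^{iφ/2}` and `b = sin (θ/2) e^{-iφ/2}` the two equations read
`a p_d + b q_d = 0` and `conj a · q_{-d} - conj b · p_{-d} = 0`. By the orthogonality condition
these two conditions on `(a, b)` are proportional, so they have a common nonzero solution; both are
invariant under rescaling `(a, b)`, and every nonzero vector of `ℂ²` is a complex multiple of a pair
of the above shape. -/

open Complex ComplexConjugate

lemma ofReal_norm_div_mul_exp_arg_sub_mul_I (w : ℂ) (r ψ : ℝ) :
    ((‖w‖ / r : ℝ) : ℂ) * exp ((w.arg - ψ) * I) = exp (-ψ * I) / r * w := by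
  conv_rhs => rw [← norm_mul_exp_arg_mul_I w]
  rw [sub_mul, exp_sub, neg_mul, exp_neg]
  push_cast
  ring

/-- Writing `x = |x| e^{iα}`, `y = |y| e^{iβ}`, take `θ / 2 = arg (|x| + |y| i)`, `φ = α - β`
and `c = e^{-i(α + β)/2} / ‖(x, y)‖₂`. -/
lemma exists_cos_sin_mul_exp_eq_mul {x y : ℂ} (h : (x, y) ≠ 0) :
    ∃ (c : ℂ) (θ φ : ℝ),
      (Real.cos (θ / 2) : ℂ) * exp (I * φ / 2) = c * x ∧
      (Real.sin (θ / 2) : ℂ) * exp (-(I * φ) / 2) = c * y := by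
  set z : ℂ := ‖x‖ + ‖y‖ * I
  have hz : z ≠ 0 := by
    contrapose! h
    have hx : ‖x‖ = 0 := by simpa [z] using congrArg re h
    have hy : ‖y‖ = 0 := by simpa [z] using congrArg im h
    simp_all
  set ψ := (x.arg + y.arg) / 2
  refine ⟨exp (-ψ * I) / ‖z‖, 2 * z.arg, x.arg - y.arg, ?_, ?_⟩
  · rw [mul_div_cancel_left₀ _ two_ne_zero, cos_arg hz, ← ofReal_norm_div_mul_exp_arg_sub_mul_I]
    congr 3
    · simp [z]
    · push_cast [ψ]; ring
  · rw [mul_div_cancel_left₀ _ two_ne_zero, sin_arg, ← ofReal_norm_div_mul_exp_arg_sub_mul_I]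
    congr 3
    · simp [z]
    · push_cast [ψ]; ring

lemma conj_ofReal_mul_exp_I_mul_div_two (r t : ℝ) :
    conj ((r : ℂ) * exp (I * t / 2)) = r * exp (-(I * t) / 2) := by
  rw [map_mul, conj_ofReal, ← exp_conj, map_div₀, map_mul, conj_I, conj_ofReal, map_ofNat,
    neg_mul, neg_div]

lemma exists_ne_zero_of_mul_conj_add_mul_conj_eq_zero {p q p' q' : ℂ}
    (hne : (p, q) ≠ (0, 0) ∨ (p', q') ≠ (0, 0)) (horth : p * conj p' + q * conj q' = 0) :
    ∃ x y : ℂ, (x, y) ≠ 0 ∧ x * p + y * q = 0 ∧ conj x * q' - conj y * p' = 0 := by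
  by_cases hpq : (p, q) = (0, 0)
  · obtain ⟨rfl, rfl⟩ := Prod.mk.inj hpq
    exact ⟨conj p', conj q', by simpa using hne, by ring, by simp only [conj_conj]; ring⟩
  · refine ⟨-q, p, by simpa [and_comm] using hpq, by ring, ?_⟩
    have horth' : conj p * p' + conj q * q' = 0 := by simpa using congrArg conj horth
    rw [map_neg]
    linear_combination -horth'

theorem stmt5_general (pd pmd qd qmd : ℂ)
    (hne' : (pd, qd) ≠ (0, 0) ∨ (pmd, qmd) ≠ (0, 0))
    (horth : pd * (starRingEnd ℂ) pmd + qd * (starRingEnd ℂ) qmd = 0) :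
    ∃ θ φ : ℝ,
      (Real.cos (θ / 2) : ℂ) * Complex.exp (Complex.I * (φ : ℂ) / 2) * pd +
        (Real.sin (θ / 2) : ℂ) * Complex.exp (-(Complex.I * (φ : ℂ)) / 2) * qd = 0 ∧
      -((Real.sin (θ / 2) : ℂ) * Complex.exp (Complex.I * (φ : ℂ) / 2) * pmd) +
        (Real.cos (θ / 2) : ℂ) * Complex.exp (-(Complex.I * (φ : ℂ)) / 2) * qmd = 0 := by
  obtain ⟨x, y, hxy, hd, hmd⟩ := exists_ne_zero_of_mul_conj_add_mul_conj_eq_zero hne' horth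
  obtain ⟨c, θ, φ, hcos, hsin⟩ := exists_cos_sin_mul_exp_eq_mul hxy
  refine ⟨θ, φ, ?_, ?_⟩
  · rw [hcos, hsin]
    linear_combination c * hd
  · rw [← conj_ofReal_mul_exp_I_mul_div_two (Real.cos (θ / 2)),
      ← conj_conj ((Real.sin (θ / 2) : ℂ) * _), conj_ofReal_mul_exp_I_mul_div_two, hsin, hcos,
      map_mul, map_mul]
    linear_combination conj c * hmd

/-- angle selection with complex coefficients: given the orthogonality
condition `p_d conj(p_{-d}) + q_d conj(q_{-d}) = 0`, not all four coefficients zero, there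
exist real `θ, φ` cancelling both leading coefficients simultaneously. -/
theorem stmt5 (pd pmd qd qmd : ℂ)
    (hne : ¬(pd = 0 ∧ pmd = 0 ∧ qd = 0 ∧ qmd = 0))
    (hne' : (pd, qd) ≠ (0, 0) ∨ (pmd, qmd) ≠ (0, 0))
    (horth : pd * (starRingEnd ℂ) pmd + qd * (starRingEnd ℂ) qmd = 0) :
    ∃ θ φ : ℝ,
      (Real.cos (θ / 2) : ℂ) * Complex.exp (Complex.I * (φ : ℂ) / 2) * pd +
        (Real.sin (θ / 2) : ℂ) * Complex.exp (-(Complex.I * (φ : ℂ)) / 2) * qd = 0 ∧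
      -((Real.sin (θ / 2) : ℂ) * Complex.exp (Complex.I * (φ : ℂ) / 2) * pmd) +
        (Real.cos (θ / 2) : ℂ) * Complex.exp (-(Complex.I * (φ : ℂ)) / 2) * qmd = 0 :=
  stmt5_general pd pmd qd qmd hne' horth
end

section
/- Let p_d, p_{-d}, q_d, q_{-d} be real numbers satisfying p_d · p_{-d} + q_d · q_{-d} = 0. Then there exists a real number θ such that cos(θ/2) p_d + sin(θ/2) q_d = 0 and -sin(θ/2) p_{-d} + cos(θ/2) q_{-d} = 0 hold simultaneously. -/
/-!
The two equations say that the unit vector `(cos (θ/2), sin (θ/2))` is orthogonal both to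
`(p_d, q_d)` and to `(q_{-d}, -p_{-d})`. The hypothesis says exactly that these two vectors are
collinear, so any unit vector orthogonal to their common line works; its angle is the argument of
a suitable complex number.
-/

open Real

theorem exists_cos_mul_add_sin_mul_eq_zero_of_ne {a b c d : ℝ} (hab : a ≠ 0 ∨ b ≠ 0)
    (h : a * d = b * c) : ∃ φ : ℝ, cos φ * a + sin φ * b = 0 ∧ cos φ * c + sin φ * d = 0 := by
  -- `z` is `(a, b)` rotated by a right angle, so its argument is orthogonal to `(a, b)`.
  set z : ℂ := ⟨b, -a⟩
  have hz : ‖z‖ ≠ 0 := by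
    rw [norm_ne_zero_iff, Ne, Complex.ext_iff]
    simp only [z, Complex.zero_re, Complex.zero_im, neg_eq_zero]
    tauto
  have hcos : ‖z‖ * cos z.arg = b := Complex.norm_mul_cos_arg z
  have hsin : ‖z‖ * sin z.arg = -a := Complex.norm_mul_sin_arg z
  refine ⟨z.arg, mul_left_cancel₀ hz ?_, mul_left_cancel₀ hz ?_⟩
  · linear_combination a * hcos + b * hsin
  · linear_combination c * hcos + d * hsin - h

theorem exists_cos_mul_add_sin_mul_eq_zero_of_mul_eq_mul {a b c d : ℝ} (h : a * d = b * c) :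
    ∃ φ : ℝ, cos φ * a + sin φ * b = 0 ∧ cos φ * c + sin φ * d = 0 := by
  by_cases hab : a = 0 ∧ b = 0
  · obtain ⟨rfl, rfl⟩ := hab
    by_cases hcd : c = 0 ∧ d = 0
    · obtain ⟨rfl, rfl⟩ := hcd
      exact ⟨0, by simp, by simp⟩
    · obtain ⟨φ, hcd, -⟩ := exists_cos_mul_add_sin_mul_eq_zero_of_ne (c := 0) (d := 0)
        (not_and_or.mp hcd) (by ring)
      exact ⟨φ, by simp, hcd⟩
  · exact exists_cos_mul_add_sin_mul_eq_zero_of_ne (not_and_or.mp hab) h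

/-- angle selection with real coefficients: if
`p_d p_{-d} + q_d q_{-d} = 0` then some real `θ` cancels both leading coefficients. -/
theorem stmt6 (pd pmd qd qmd : ℝ) (horth : pd * pmd + qd * qmd = 0) :
    ∃ θ : ℝ,
      Real.cos (θ / 2) * pd + Real.sin (θ / 2) * qd = 0 ∧
      -(Real.sin (θ / 2) * pmd) + Real.cos (θ / 2) * qmd = 0 := by
  obtain ⟨φ, hp, hq⟩ :=
    exists_cos_mul_add_sin_mul_eq_zero_of_mul_eq_mul (a := pd) (b := qd) (c := qmd) (d := -pmd)
      (by linear_combination -horth)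
  refine ⟨2 * φ, ?_, ?_⟩ <;> rw [mul_div_cancel_left₀ φ two_ne_zero]
  · exact hp
  · linear_combination hq
end

section
/- Let P, Q be Laurent polynomials in z = e^{ix/2} with complex coefficients, of degree at most d ≥ 1, both with parity d mod 2, satisfying |P(x)|² + |Q(x)|² = 1 for all real x. Then there exist real θ, φ such that, defining P̂ = cos(θ/2) e^{iφ/2} e^{ix/2} P + sin(θ/2) e^{-iφ/2} e^{ix/2} Q and Q̂ = cos(θ/2) e^{-iφ/2} e^{-ix/2} Q - sin(θ/2) e^{iφ/2} e^{-ix/2} P, the Laurent polynomials P̂ and Q̂ have degree at most d−1, parity (d−1) mod 2, and satisfy |P̂(x)|² + |Q̂(x)|² = 1 for all real x. -/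
/-! On the unit circle, `|P|² + |Q|² = 1` is an identity between Laurent polynomials in
`z = e^{ix/2}`, so its coefficient of `z^{2d}` vanishes: `p_d conj p_{-d} + q_d conj q_{-d} = 0`.
This says that the top coefficients `(p_d, q_d)` and the conjugated bottom coefficients
`(conj q_{-d}, -conj p_{-d})` are parallel, so one pair `(α, β)` coming from `W(θ, φ)` annihilates
both. Then `z (α P + β Q)` loses its top term and `z⁻¹ (conj α Q - conj β P)` its bottom term,
the other extreme terms vanish by parity, and unitarity preserves `|P|² + |Q|² = 1`. -/

open Complex ComplexConjugate Finset

theorem zpow_mul_sum_Icc_eq_sum_Icc_add {K : Type*} [Field K] {z : K} (hz : z ≠ 0) (f : ℤ → K)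
    (a b k : ℤ) :
    z ^ k * ∑ n ∈ Icc a b, f n * z ^ n =
      ∑ n ∈ Icc (a + k) (b + k), f (n - k) * z ^ n := by
  rw [← map_add_right_Icc, sum_map, mul_sum]
  refine sum_congr rfl fun n _ => ?_
  simp only [addRightEmbedding_apply, add_sub_cancel_right, zpow_add₀ hz]
  ring

theorem sum_Icc_eq_sum_Icc_neg_self {M : Type*} [AddCommMonoid M] {f : ℤ → M} {N a b : ℤ}
    (hf : ∀ n, N < |n| → f n = 0) (ha : a ≤ -N) (hb : N ≤ b) :
    ∑ n ∈ Icc a b, f n = ∑ n ∈ Icc (-N) N, f n := by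
  refine (sum_subset (Icc_subset_Icc ha hb) fun n _ hn => hf n ?_).symm
  rw [mem_Icc] at hn
  rw [lt_abs]
  omega

theorem zpow_mul_sum_Icc_eq_sum_Icc_of_eq_zero {K : Type*} [Field K] {z : K} (hz : z ≠ 0)
    {r : ℤ → K} {N M k : ℤ} (hr : ∀ n, M < |n| → r (n - k) = 0) (hk : |k| ≤ N - M) :
    z ^ k * ∑ n ∈ Icc (-N) N, r n * z ^ n =
      ∑ n ∈ Icc (-M) M, r (n - k) * z ^ n := by
  rw [abs_le] at hk
  rw [zpow_mul_sum_Icc_eq_sum_Icc_add hz]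
  exact sum_Icc_eq_sum_Icc_neg_self (fun n hn => by rw [hr n hn, zero_mul]) (by omega) (by omega)

theorem sq_norm_sum_mul_zpow {z : ℂ} (hz : ‖z‖ = 1) (S : Finset ℤ) (f : ℤ → ℂ) :
    (‖∑ n ∈ S, f n * z ^ n‖ : ℂ) ^ 2 =
      ∑ i ∈ S ×ˢ S, f i.1 * conj (f i.2) * z ^ (i.1 - i.2) := by
  have hz0 : z ≠ 0 := by rintro rfl; simp at hz
  have hconj : conj z = z⁻¹ := by
    rw [inv_def, normSq_eq_norm_sq, hz]; simp
  rw [← mul_conj', map_sum, sum_mul_sum, sum_product]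
  refine sum_congr rfl fun m _ => sum_congr rfl fun n _ => ?_
  rw [map_mul, map_zpow₀, hconj, inv_zpow', zpow_sub₀ hz0, zpow_neg]
  ring

/-- `f` is the coefficient sequence of a Laurent polynomial of degree at most `N` and
parity `N mod 2`. -/
def HasDegreeParity_s7 {M : Type*} [Zero M] (f : ℤ → M) (N : ℤ) : Prop :=
  (∀ n, N < |n| → f n = 0) ∧ ∀ n, n % 2 ≠ N % 2 → f n = 0

namespace HasDegreeParity_s7

variable {M : Type*} [Zero M] {f g h : ℤ → M} {N : ℤ}

theorem of_eq_zero_of_eq_zero (hf : HasDegreeParity_s7 f N) (hg : HasDegreeParity_s7 g N)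
    (hfg : ∀ n, f n = 0 → g n = 0 → h n = 0) : HasDegreeParity_s7 h N :=
  ⟨fun n hn => hfg n (hf.1 n hn) (hg.1 n hn), fun n hn => hfg n (hf.2 n hn) (hg.2 n hn)⟩

theorem comp_sub_one (hf : HasDegreeParity_s7 f N) (htop : f N = 0) :
    HasDegreeParity_s7 (fun n => f (n - 1)) (N - 1) := by
  refine ⟨fun n hn => show f (n - 1) = 0 from ?_, fun n hn => hf.2 _ (by omega)⟩
  by_cases hN : n - 1 = N
  · rwa [hN]
  by_cases hdeg : N < |n - 1|
  · exact hf.1 _ hdeg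
  rw [lt_abs] at hn hdeg
  exact hf.2 _ (by omega)

theorem comp_add_one (hf : HasDegreeParity_s7 f N) (hbot : f (-N) = 0) :
    HasDegreeParity_s7 (fun n => f (n + 1)) (N - 1) := by
  refine ⟨fun n hn => show f (n + 1) = 0 from ?_, fun n hn => hf.2 _ (by omega)⟩
  by_cases hN : n + 1 = -N
  · rwa [hN]
  by_cases hdeg : N < |n + 1|
  · exact hf.1 _ hdeg
  rw [lt_abs] at hn hdeg
  exact hf.2 _ (by omega)

theorem mul_sum_Icc_mul_zpow {K : Type*} [Field K] {r : ℤ → K} {N : ℤ}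
    (hr : HasDegreeParity_s7 r N) (htop : r N = 0) {z : K} (hz : z ≠ 0) :
    z * ∑ n ∈ Icc (-N) N, r n * z ^ n =
      ∑ n ∈ Icc (-(N - 1)) (N - 1), r (n - 1) * z ^ n := by
  simpa only [zpow_one] using
    zpow_mul_sum_Icc_eq_sum_Icc_of_eq_zero hz (hr.comp_sub_one htop).1 (by norm_num)

theorem inv_mul_sum_Icc_mul_zpow {K : Type*} [Field K] {r : ℤ → K} {N : ℤ}
    (hr : HasDegreeParity_s7 r N) (hbot : r (-N) = 0) {z : K} (hz : z ≠ 0) :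
    z⁻¹ * ∑ n ∈ Icc (-N) N, r n * z ^ n =
      ∑ n ∈ Icc (-(N - 1)) (N - 1), r (n + 1) * z ^ n := by
  simpa only [zpow_neg_one, sub_neg_eq_add] using
    zpow_mul_sum_Icc_eq_sum_Icc_of_eq_zero hz (k := -1)
    (fun n hn => by simpa using (hr.comp_add_one hbot).1 n hn) (by norm_num)

end HasDegreeParity_s7

theorem exp_I_mul_int_mul_div_two (n : ℤ) (x : ℝ) :
    exp (I * n * x / 2) = exp (I * x / 2) ^ n := by
  rw [← exp_int_mul]
  ring_nf

theorem norm_exp_I_mul_div_two (x : ℝ) : ‖exp (I * x / 2)‖ = 1 := by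
  simp [norm_exp]

theorem conj_exp_I_mul_div_two (x : ℝ) : conj (exp (I * x / 2)) = exp (-(I * x) / 2) := by
  rw [← exp_conj]
  simp [neg_div, map_ofNat]

theorem infinite_range_exp_I_mul_div_two :
    (Set.range fun x : ℝ => exp (I * x / 2)).Infinite := by
  have hinj : Set.InjOn (fun x : ℝ => exp (I * x / 2)) (Set.Ico 0 (4 * Real.pi)) := by
    intro x hx y hy hxy
    have hmem : ∀ t ∈ Set.Ico 0 (4 * Real.pi), t / 2 ∈ Set.Ico 0 (0 + 2 * Real.pi) :=
      fun t ⟨h0, h1⟩ => ⟨by linarith, by linarith⟩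
    have := Circle.exp_injOn_Ico (by linarith) (hmem x hx) (hmem y hy) <| Subtype.ext <| by
      simp only [Circle.coe_exp]
      convert hxy using 2 <;> push_cast <;> ring
    linarith
  exact ((Set.Ico_infinite (by positivity)).image hinj).mono (Set.image_subset_range _ _)

/-- Multiplying by a high power of `z` turns the Laurent sum into a polynomial vanishing on the
unit circle, hence identically; its coefficients are the fibre sums over the exponents. -/
theorem sum_filter_eq_zero_of_sum_mul_zpow_eq_const {ι : Type*} (s : Finset ι) (c : ι → ℂ)
    (e : ι → ℤ) (a : ℂ) (h : ∀ x : ℝ, ∑ i ∈ s, c i * exp (I * x / 2) ^ e i = a) {k : ℤ}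
    (hk : k ≠ 0) : ∑ i ∈ s with e i = k, c i = 0 := by
  classical
  set N : ℕ := ∑ i ∈ s, (e i).natAbs
  have hN : ∀ i ∈ s, 0 ≤ e i + N := fun i hi => by
    have := single_le_sum (f := fun i => (e i).natAbs) (fun _ _ => Nat.zero_le _) hi
    omega
  set F : Polynomial ℂ :=
    ∑ i ∈ s, Polynomial.C (c i) * Polynomial.X ^ (e i + N).toNat -
      Polynomial.C a * Polynomial.X ^ N
  have hF : F = 0 := by
    refine Polynomial.eq_zero_of_infinite_isRoot F (infinite_range_exp_I_mul_div_two.mono ?_)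
    rintro _ ⟨x, rfl⟩
    set z := exp (I * x / 2)
    have hpow : ∀ i ∈ s, z ^ (e i + N).toNat = z ^ e i * z ^ N := fun i hi => by
      rw [← zpow_natCast, Int.toNat_of_nonneg (hN i hi), zpow_add₀ (exp_ne_zero _), zpow_natCast]
    simp only [F, Set.mem_ofPred_eq, Polynomial.IsRoot, Polynomial.eval_sub,
      Polynomial.eval_finsetSum, Polynomial.eval_mul, Polynomial.eval_C, Polynomial.eval_pow,
      Polynomial.eval_X]
    rw [sum_congr rfl fun i hi => by rw [hpow i hi, ← mul_assoc], ← sum_mul, h x, sub_self]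
  by_cases hkN : 0 ≤ k + N
  · have hcoeff := congrArg (Polynomial.coeff · (k + N).toNat) hF
    simp only [F, Polynomial.coeff_sub, Polynomial.finsetSum_coeff, Polynomial.coeff_C_mul_X_pow,
      Polynomial.coeff_zero] at hcoeff
    rw [if_neg (by omega), sub_zero] at hcoeff
    rw [sum_filter]
    refine (sum_congr rfl fun i hi => if_congr ?_ rfl rfl).trans hcoeff
    have := hN i hi
    omega
  · refine sum_eq_zero fun i hi => absurd ?_ hkN
    rw [mem_filter] at hi
    have := hN i hi.1
    omega

theorem top_mul_conj_bottom_add_eq_zero {N : ℤ} (hN : 0 < N) {p q : ℤ → ℂ}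
    (h : ∀ x : ℝ, ‖∑ n ∈ Icc (-N) N, p n * exp (I * x / 2) ^ n‖ ^ 2 +
      ‖∑ n ∈ Icc (-N) N, q n * exp (I * x / 2) ^ n‖ ^ 2 = 1) :
    p N * conj (p (-N)) + q N * conj (q (-N)) = 0 := by
  have key := sum_filter_eq_zero_of_sum_mul_zpow_eq_const (Icc (-N) N ×ˢ Icc (-N) N)
    (fun i => p i.1 * conj (p i.2) + q i.1 * conj (q i.2)) (fun i => i.1 - i.2) 1
    (fun x => by
      have hx := congrArg ((↑) : ℝ → ℂ) (h x)
      push_cast at hx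
      rw [sq_norm_sum_mul_zpow (norm_exp_I_mul_div_two x),
        sq_norm_sum_mul_zpow (norm_exp_I_mul_div_two x), ← sum_add_distrib] at hx
      simpa only [add_mul] using hx)
    (k := 2 * N) (by omega)
  have hfilter : {i ∈ Icc (-N) N ×ˢ Icc (-N) N | i.1 - i.2 = 2 * N} = {(N, -N)} := by
    ext ⟨m, n⟩
    simp only [mem_filter, mem_product, mem_Icc, mem_singleton, Prod.mk.injEq]
    omega
  rwa [hfilter, sum_singleton] at key

/-- `(wAlpha θ φ, wBeta θ φ)` is the first row of `W(θ, φ)`; the second row is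
`(-conj (wBeta θ φ), conj (wAlpha θ φ))`. -/
noncomputable def wAlpha (θ φ : ℝ) : ℂ := Real.cos (θ / 2) * exp (I * φ / 2)

noncomputable def wBeta (θ φ : ℝ) : ℂ := Real.sin (θ / 2) * exp (-(I * φ) / 2)

theorem conj_wAlpha (θ φ : ℝ) : conj (wAlpha θ φ) = Real.cos (θ / 2) * exp (-(I * φ) / 2) := by
  rw [wAlpha, map_mul, conj_ofReal, conj_exp_I_mul_div_two]

theorem conj_wBeta (θ φ : ℝ) : conj (wBeta θ φ) = Real.sin (θ / 2) * exp (I * φ / 2) := by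
  rw [wBeta, map_mul, conj_ofReal, ← conj_exp_I_mul_div_two, conj_conj]

theorem sq_norm_wAlpha_add_sq_norm_wBeta (θ φ : ℝ) : ‖wAlpha θ φ‖ ^ 2 + ‖wBeta θ φ‖ ^ 2 = 1 := by
  simp [wAlpha, wBeta, norm_exp, -ofReal_cos, -ofReal_sin]

theorem exists_wAlpha_mul_add_wBeta_mul_eq_zero (a b : ℂ) :
    ∃ θ φ : ℝ, wAlpha θ φ * a + wBeta θ φ * b = 0 := by
  by_cases ha : a = 0
  · exact ⟨0, 0, by simp [wBeta, ha]⟩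
  -- `(cos, sin) (θ / 2)` is proportional to `(‖b‖, ‖a‖)`, and `e^{iφ}` is the phase of `-b conj a`.
  set ξ : ℂ := ‖b‖ + ‖a‖ * I
  have hξ : ξ ≠ 0 := fun h => ha (by simpa [ξ] using congrArg im h)
  set w := -(b * conj a)
  refine ⟨2 * arg ξ, arg w, ?_⟩
  have hcos : Real.cos (2 * arg ξ / 2) = ‖b‖ / ‖ξ‖ := by
    rw [mul_div_cancel_left₀ _ two_ne_zero, cos_arg hξ]; simp [ξ]
  have hsin : Real.sin (2 * arg ξ / 2) = ‖a‖ / ‖ξ‖ := by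
    rw [mul_div_cancel_left₀ _ two_ne_zero, sin_arg]; simp [ξ]
  set X := exp (I * arg w / 2)
  have hX : X ≠ 0 := exp_ne_zero _
  have hY : exp (-(I * arg w) / 2) = X⁻¹ := by rw [neg_div, exp_neg]
  have hXX : (‖a‖ * ‖b‖ : ℂ) * X ^ 2 = w := by
    have hw : ‖w‖ = ‖a‖ * ‖b‖ := by simp [w, mul_comm]
    calc (‖a‖ * ‖b‖ : ℂ) * X ^ 2 = ‖w‖ * exp (arg w * I) := by
          rw [hw, ← exp_nat_mul]; push_cast; ring_nf
      _ = w := norm_mul_exp_arg_mul_I w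
  have hna : (‖a‖ : ℂ) ≠ 0 := by exact_mod_cast norm_ne_zero_iff.mpr ha
  have key : (‖b‖ : ℂ) * X * a + ‖a‖ * X⁻¹ * b = 0 := by
    refine (mul_right_inj' (mul_ne_zero hna hX)).mp ?_
    linear_combination a * hXX - b * mul_conj' a + ‖a‖ ^ 2 * b * mul_inv_cancel₀ hX
  simp only [wAlpha, wBeta, hcos, hsin, hY]
  push_cast
  linear_combination key / ‖ξ‖

theorem mul_add_mul_eq_zero_of_mul_eq_mul {K : Type*} [Field K] {a b a' b' α β : K}
    (hab : a ≠ 0 ∨ b ≠ 0) (h : a * b' = b * a') (h0 : α * a + β * b = 0) :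
    α * a' + β * b' = 0 := by
  rcases hab with ha | hb
  · exact (mul_right_inj' ha).mp (by linear_combination a' * h0 + β * h)
  · exact (mul_right_inj' hb).mp (by linear_combination b' * h0 - α * h)

theorem exists_wAlpha_wBeta_of_mul_conj_add_mul_conj_eq_zero {a b u v : ℂ}
    (h : a * conj v + b * conj u = 0) :
    ∃ θ φ : ℝ, wAlpha θ φ * a + wBeta θ φ * b = 0 ∧
      conj (wAlpha θ φ) * u - conj (wBeta θ φ) * v = 0 := by
  have hconj : ∀ θ φ, wAlpha θ φ * conj u + wBeta θ φ * -conj v = 0 →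
      conj (wAlpha θ φ) * u - conj (wBeta θ φ) * v = 0 := fun θ φ h' => by
    simpa [sub_eq_add_neg] using congrArg conj h'
  by_cases hab : a = 0 ∧ b = 0
  · obtain ⟨θ, φ, h'⟩ := exists_wAlpha_mul_add_wBeta_mul_eq_zero (conj u) (-conj v)
    exact ⟨θ, φ, by simp [hab.1, hab.2], hconj θ φ h'⟩
  · obtain ⟨θ, φ, h0⟩ := exists_wAlpha_mul_add_wBeta_mul_eq_zero a b
    exact ⟨θ, φ, h0, hconj θ φ <| mul_add_mul_eq_zero_of_mul_eq_mul (not_and_or.mp hab)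
      (by linear_combination -h) h0⟩

theorem sq_norm_add_sq_norm_unitary (α β u v w w' : ℂ) (hw : ‖w‖ = 1) (hw' : ‖w'‖ = 1) :
    ‖α * w * u + β * w * v‖ ^ 2 + ‖conj α * w' * v - conj β * w' * u‖ ^ 2 =
      (‖α‖ ^ 2 + ‖β‖ ^ 2) * (‖u‖ ^ 2 + ‖v‖ ^ 2) := by
  rw [show α * w * u + β * w * v = w * (α * u + β * v) by ring,
    show conj α * w' * v - conj β * w' * u = w' * (conj α * v - conj β * u) by ring,
    norm_mul, norm_mul, hw, hw', one_mul, one_mul]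
  simp only [Complex.sq_norm, normSq_apply, add_re, add_im, sub_re, sub_im, mul_re, mul_im,
    conj_re, conj_im]
  ring

/-- degree-reduction step. If `P, Q` are complex Laurent polynomials in
`e^{ix/2}` of degree at most `d ≥ 1`, parity `d mod 2`, with `|P|² + |Q|² = 1` on ℝ, then
for some real `θ, φ` the functions
`P̂ = cos(θ/2) e^{iφ/2} e^{ix/2} P + sin(θ/2) e^{-iφ/2} e^{ix/2} Q` and
`Q̂ = cos(θ/2) e^{-iφ/2} e^{-ix/2} Q − sin(θ/2) e^{iφ/2} e^{-ix/2} P`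
are Laurent polynomials of degree at most `d−1`, parity `(d−1) mod 2`, with
`|P̂|² + |Q̂|² = 1` on ℝ. -/
theorem stmt7 (d : ℕ) (hd : 1 ≤ d) (p q : ℤ → ℂ) (P Q : ℝ → ℂ)
    (hP : ∀ x : ℝ, P x = ∑ n ∈ Finset.Icc (-(d : ℤ)) (d : ℤ),
        p n * Complex.exp (Complex.I * (n : ℂ) * (x : ℂ) / 2))
    (hQ : ∀ x : ℝ, Q x = ∑ n ∈ Finset.Icc (-(d : ℤ)) (d : ℤ),
        q n * Complex.exp (Complex.I * (n : ℂ) * (x : ℂ) / 2))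
    (hpdeg : ∀ n : ℤ, (d : ℤ) < |n| → p n = 0)
    (hqdeg : ∀ n : ℤ, (d : ℤ) < |n| → q n = 0)
    (hppar : ∀ n : ℤ, n % 2 ≠ (d : ℤ) % 2 → p n = 0)
    (hqpar : ∀ n : ℤ, n % 2 ≠ (d : ℤ) % 2 → q n = 0)
    (hnorm : ∀ x : ℝ, ‖P x‖ ^ 2 + ‖Q x‖ ^ 2 = 1) :
    ∃ θ φ : ℝ, ∃ ph qh : ℤ → ℂ,
      (∀ n : ℤ, (d : ℤ) - 1 < |n| → ph n = 0) ∧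
      (∀ n : ℤ, (d : ℤ) - 1 < |n| → qh n = 0) ∧
      (∀ n : ℤ, n % 2 ≠ ((d : ℤ) - 1) % 2 → ph n = 0) ∧
      (∀ n : ℤ, n % 2 ≠ ((d : ℤ) - 1) % 2 → qh n = 0) ∧
      (∀ x : ℝ,
        (Real.cos (θ / 2) : ℂ) * Complex.exp (Complex.I * (φ : ℂ) / 2) *
            Complex.exp (Complex.I * (x : ℂ) / 2) * P x +
          (Real.sin (θ / 2) : ℂ) * Complex.exp (-(Complex.I * (φ : ℂ)) / 2) *
            Complex.exp (Complex.I * (x : ℂ) / 2) * Q x =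
        ∑ n ∈ Finset.Icc (-((d : ℤ) - 1)) ((d : ℤ) - 1),
          ph n * Complex.exp (Complex.I * (n : ℂ) * (x : ℂ) / 2)) ∧
      (∀ x : ℝ,
        (Real.cos (θ / 2) : ℂ) * Complex.exp (-(Complex.I * (φ : ℂ)) / 2) *
            Complex.exp (-(Complex.I * (x : ℂ)) / 2) * Q x -
          (Real.sin (θ / 2) : ℂ) * Complex.exp (Complex.I * (φ : ℂ) / 2) *
            Complex.exp (-(Complex.I * (x : ℂ)) / 2) * P x =
        ∑ n ∈ Finset.Icc (-((d : ℤ) - 1)) ((d : ℤ) - 1),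
          qh n * Complex.exp (Complex.I * (n : ℂ) * (x : ℂ) / 2)) ∧
      (∀ x : ℝ,
        ‖(Real.cos (θ / 2) : ℂ) * Complex.exp (Complex.I * (φ : ℂ) / 2) *
              Complex.exp (Complex.I * (x : ℂ) / 2) * P x +
            (Real.sin (θ / 2) : ℂ) * Complex.exp (-(Complex.I * (φ : ℂ)) / 2) *
              Complex.exp (Complex.I * (x : ℂ) / 2) * Q x‖ ^ 2 +
          ‖(Real.cos (θ / 2) : ℂ) * Complex.exp (-(Complex.I * (φ : ℂ)) / 2) *
              Complex.exp (-(Complex.I * (x : ℂ)) / 2) * Q x -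
            (Real.sin (θ / 2) : ℂ) * Complex.exp (Complex.I * (φ : ℂ) / 2) *
              Complex.exp (-(Complex.I * (x : ℂ)) / 2) * P x‖ ^ 2 = 1) := by
  have hp : HasDegreeParity_s7 p d := ⟨hpdeg, hppar⟩
  have hq : HasDegreeParity_s7 q d := ⟨hqdeg, hqpar⟩
  simp only [exp_I_mul_int_mul_div_two, ← wAlpha.eq_1, ← wBeta.eq_1, ← conj_wAlpha, ← conj_wBeta]
    at hP hQ ⊢
  obtain ⟨θ, φ, htop, hbot⟩ := exists_wAlpha_wBeta_of_mul_conj_add_mul_conj_eq_zero <|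
    top_mul_conj_bottom_add_eq_zero (p := p) (q := q) (N := d) (by omega) fun x => by
      rw [← hP x, ← hQ x]; exact hnorm x
  set r : ℤ → ℂ := fun n => wAlpha θ φ * p n + wBeta θ φ * q n with hr_def
  set r' : ℤ → ℂ := fun n => conj (wAlpha θ φ) * q n - conj (wBeta θ φ) * p n with hr'_def
  have hr : HasDegreeParity_s7 r d :=
    hp.of_eq_zero_of_eq_zero hq fun n hpn hqn => by simp [r, hpn, hqn]
  have hr' : HasDegreeParity_s7 r' d :=
    hq.of_eq_zero_of_eq_zero hp fun n hqn hpn => by simp [r', hpn, hqn]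
  have hph := hr.comp_sub_one htop
  have hqh := hr'.comp_add_one hbot
  have hE (x : ℝ) : exp (-(I * x) / 2) = (exp (I * x / 2))⁻¹ := by rw [neg_div, exp_neg]
  refine ⟨θ, φ, fun n => r (n - 1), fun n => r' (n + 1), hph.1, hqh.1, hph.2, hqh.2,
    fun x => ?_, fun x => ?_, fun x => ?_⟩
  · rw [← hr.mul_sum_Icc_mul_zpow htop (exp_ne_zero _), hP x, hQ x]
    simp only [hr_def, mul_sum, ← sum_add_distrib]
    exact sum_congr rfl fun n _ => by ring
  · rw [← hr'.inv_mul_sum_Icc_mul_zpow hbot (exp_ne_zero _), hP x, hQ x, hE x]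
    simp only [hr'_def, mul_sum, ← sum_sub_distrib]
    exact sum_congr rfl fun n _ => by ring
  · rw [sq_norm_add_sq_norm_unitary _ _ _ _ _ _ (norm_exp_I_mul_div_two x)
      (by rw [hE x, norm_inv, norm_exp_I_mul_div_two, inv_one]),
      sq_norm_wAlpha_add_sq_norm_wBeta, hnorm x, one_mul]
end

section
/- Let f : [-π, π] → [-1, 1] be a square-integrable even function and ε > 0. Then there exist N ∈ ℕ, real coefficients a₀, ..., a_N, and a trigonometric polynomial g(x) = a₀ + Σ_{n=1}^{N} a_n cos(nx) with |g(x)| ≤ 1 for all x, such that the function x ↦ 2 g(x)² − 1 satisfies ‖2g² − 1 − f‖_{L²([-π,π])} ≤ ε. -/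
/-!
Put `h = √((1 + f) / 2)`: it is even, `|h| ≤ 1` and `f = 2 h² - 1` on `[-π, π]`. Since
`|2 g² - 2 h²| ≤ 4 |g - h|` when `|g|, |h| ≤ 1`, it suffices to approximate `h` in `L²` by cosine
polynomials of modulus at most `1`. A continuous approximant of `h` can be clipped to `[-1, 1]`
and symmetrised without moving away from `h`. Weierstrass' theorem applied to `φ ∘ arccos` on
`[-1, 1]` then gives a polynomial `P` with `P (cos x)` uniformly close to `φ` on `[-π, π]`, and
polynomials in `cos x` are cosine polynomials by the product-to-sum formula.
-/

open MeasureTheory Real Polynomial Set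
open scoped ENNReal

lemma cos_nat_mul_mul_cos_nat_mul_mem_span (m n : ℕ) :
    ((fun x : ℝ => cos (m * x)) * fun x => cos (n * x)) ∈
      Submodule.span ℝ (range fun k : ℕ => fun x : ℝ => cos (k * x)) := by
  wlog hnm : n ≤ m generalizing m n
  · rw [mul_comm]; exact this n m (le_of_not_ge hnm)
  have hprod : ((fun x : ℝ => cos (m * x)) * fun x => cos (n * x)) =
      (2⁻¹ : ℝ) • (fun x : ℝ => cos ((m - n : ℕ) * x)) +
        (2⁻¹ : ℝ) • fun x : ℝ => cos ((m + n : ℕ) * x) := by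
    ext x
    have := two_mul_cos_mul_cos (m * x) (n * x)
    simp only [Pi.mul_apply, Pi.add_apply, Pi.smul_apply, smul_eq_mul, Nat.cast_sub hnm,
      Nat.cast_add, sub_mul, add_mul] at this ⊢
    linarith
  rw [hprod]
  exact add_mem (Submodule.smul_mem _ _ (Submodule.subset_span ⟨_, rfl⟩))
    (Submodule.smul_mem _ _ (Submodule.subset_span ⟨_, rfl⟩))

noncomputable def cosPolynomials : Subalgebra ℝ (ℝ → ℝ) :=
  (Submodule.span ℝ (range fun n : ℕ => fun x : ℝ => cos (n * x))).toSubalgebra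
    (Submodule.subset_span ⟨0, by ext; simp⟩)
    (fun f g hf hg => by
      have hfg := Submodule.mul_mem_mul hf hg
      rw [Submodule.span_mul_span] at hfg
      refine Submodule.span_le.2 ?_ hfg
      rintro _ ⟨_, ⟨m, rfl⟩, _, ⟨n, rfl⟩, rfl⟩
      exact cos_nat_mul_mul_cos_nat_mul_mem_span m n)

lemma polynomial_eval_cos_mem_cosPolynomials (p : ℝ[X]) :
    (fun x => p.eval (cos x)) ∈ cosPolynomials := by
  have hcos : cos ∈ cosPolynomials := Submodule.subset_span ⟨1, by ext; simp⟩
  have hp := Algebra.adjoin_le (singleton_subset_iff.2 hcos)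
    (aeval_mem_adjoin_singleton ℝ cos (p := p))
  rwa [aeval_pi_apply] at hp

lemma exists_cos_sum_eq_of_mem_cosPolynomials {g : ℝ → ℝ} (hg : g ∈ cosPolynomials) :
    ∃ (N : ℕ) (a : ℕ → ℝ), ∀ x, g x = a 0 + ∑ n ∈ Finset.Icc 1 N, a n * cos (n * x) := by
  obtain ⟨c, rfl⟩ :=
    Finsupp.mem_span_range_iff_exists_finsupp.1 (Submodule.mem_toSubalgebra.1 hg)
  refine ⟨c.support.sup id, c, fun x => ?_⟩
  have hsupp : c.support ⊆ insert 0 (Finset.Icc 1 (c.support.sup id)) := fun n hn => by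
    rcases n.eq_zero_or_pos with rfl | hpos
    · exact Finset.mem_insert_self _ _
    · exact Finset.mem_insert_of_mem (Finset.mem_Icc.2 ⟨hpos, Finset.le_sup (f := id) hn⟩)
  rw [Finsupp.sum_of_support_subset c hsupp (fun n a => a • fun x : ℝ => cos (n * x))
      (fun _ _ => zero_smul _ _), Finset.sum_insert (by simp)]
  simp

lemma Function.Even.comp_arccos_cos {β : Type*} {φ : ℝ → β} (hφ : φ.Even) {x : ℝ}
    (hx : x ∈ Icc (-π) π) : φ (arccos (cos x)) = φ x := by
  rw [← cos_abs, arccos_cos (abs_nonneg x) (abs_le.2 hx)]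
  rcases abs_choice x with h | h <;> simp [h, hφ x]

lemma exists_polynomial_cos_near {φ : ℝ → ℝ} (hφ : Continuous φ) (heven : φ.Even)
    (hφ1 : ∀ x, |φ x| ≤ 1) {δ : ℝ} (hδ : 0 < δ) :
    ∃ p : ℝ[X], (∀ x, |p.eval (cos x)| ≤ 1) ∧
      ∀ x ∈ Icc (-π) π, |p.eval (cos x) - φ x| < δ := by
  wlog hδ1 : δ ≤ 1 generalizing δ
  · obtain ⟨p, hp1, hp⟩ := this one_pos le_rfl
    exact ⟨p, hp1, fun x hx => (hp x hx).trans (not_le.1 hδ1)⟩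
  -- approximating `(1 - δ/2) φ` within `δ/2` leaves room for the bound `|p (cos x)| ≤ 1`
  obtain ⟨p, hp⟩ := exists_polynomial_near_of_continuousOn (-1) 1
    (fun t => (1 - δ / 2) * φ (arccos t)) (by fun_prop) (δ / 2) (by positivity)
  refine ⟨p, fun x => ?_, fun x hx => ?_⟩
  · have hpx := hp (cos x) (cos_mem_Icc x)
    have hφx := hφ1 (arccos (cos x))
    rw [abs_lt] at hpx
    rw [abs_le] at hφx ⊢
    constructor <;> nlinarith
  · have hpx := hp (cos x) (cos_mem_Icc x)
    have hφx := hφ1 x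
    rw [heven.comp_arccos_cos hx, abs_lt] at hpx
    rw [abs_le] at hφx
    rw [abs_lt]
    constructor <;> nlinarith

section Lp

variable {α E : Type*} [MeasurableSpace α] {μ : Measure α} {p : ℝ≥0∞} [NormedAddCommGroup E]

lemma eLpNorm_sub_symmetrize_le [NormedSpace ℝ E] (hp : 1 ≤ p) {σ : α → α}
    (hσ : MeasurePreserving σ μ μ) {h φ : α → E} (hinv : ∀ x, h (σ x) = h x)
    (hh : AEStronglyMeasurable h μ) (hφ : AEStronglyMeasurable φ μ) :
    eLpNorm (h - fun x => (2⁻¹ : ℝ) • (φ x + φ (σ x))) p μ ≤ eLpNorm (h - φ) p μ := by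
  have hsplit : (h - fun x => (2⁻¹ : ℝ) • (φ x + φ (σ x))) =
      (2⁻¹ : ℝ) • ((h - φ) + (h - φ) ∘ σ) := by
    ext x
    simp only [Pi.sub_apply, Pi.add_apply, Pi.smul_apply, Function.comp_apply, hinv]
    module
  have hdiff : AEStronglyMeasurable (h - φ) μ := hh.sub hφ
  calc eLpNorm (h - fun x => (2⁻¹ : ℝ) • (φ x + φ (σ x))) p μ
      = 2⁻¹ * eLpNorm ((h - φ) + (h - φ) ∘ σ) p μ := by
        rw [hsplit, eLpNorm_const_smul, enorm_inv two_ne_zero]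
        congr 2
        simpa using Real.enorm_natCast 2
    _ ≤ 2⁻¹ * (eLpNorm (h - φ) p μ + eLpNorm ((h - φ) ∘ σ) p μ) := by
        gcongr
        exact eLpNorm_add_le hdiff (hdiff.comp_measurePreserving hσ) hp
    _ = eLpNorm (h - φ) p μ := by
        rw [eLpNorm_comp_measurePreserving hdiff hσ, ← two_mul, ← mul_assoc,
          ENNReal.inv_mul_cancel two_ne_zero ENNReal.ofNat_ne_top, one_mul]

lemma eLpNorm_sub_projIcc_le {h φ : α → ℝ} {a b : ℝ} (hab : a ≤ b)
    (hh : ∀ᵐ x ∂μ, h x ∈ Icc a b) :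
    eLpNorm (h - fun x => (projIcc a b hab (φ x) : ℝ)) p μ ≤ eLpNorm (h - φ) p μ := by
  refine eLpNorm_mono_ae ?_
  filter_upwards [hh] with x hx
  simpa only [Pi.sub_apply, Real.norm_eq_abs, projIcc_of_mem hab hx, abs_sub_comm (h x)]
    using abs_projIcc_sub_projIcc hab (c := φ x) (d := h x)

lemma exists_pos_eLpNorm_le_of_norm_le [IsFiniteMeasure μ] {ε : ℝ≥0∞} (hε : ε ≠ 0) :
    ∃ δ > 0, ∀ f : α → E, (∀ᵐ x ∂μ, ‖f x‖ ≤ δ) → eLpNorm f p μ ≤ ε := by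
  obtain ⟨c, hc, hcε⟩ := ENNReal.exists_pos_mul_lt
    (ENNReal.rpow_ne_top_of_nonneg (inv_nonneg.2 ENNReal.toReal_nonneg)
      (measure_ne_top μ univ)) hε
  refine ⟨(min c 1).toReal, ENNReal.toReal_pos (by positivity) (by simp), fun f hf => ?_⟩
  calc eLpNorm f p μ ≤ μ univ ^ p.toReal⁻¹ * ENNReal.ofReal (min c 1).toReal :=
        eLpNorm_le_of_ae_bound hf
    _ ≤ μ univ ^ p.toReal⁻¹ * c := by
        rw [ENNReal.ofReal_toReal (by simp)]
        gcongr
        exact min_le_left _ _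
    _ ≤ ε := by rw [mul_comm]; exact hcε.le

lemma eLpNorm_two_mul_sq_sub_one_sub_le {g h f : α → ℝ} (hf : ∀ᵐ x ∂μ, f x = 2 * h x ^ 2 - 1)
    (hg : ∀ᵐ x ∂μ, |g x| ≤ 1) (hh : ∀ᵐ x ∂μ, |h x| ≤ 1) :
    eLpNorm (fun x => 2 * g x ^ 2 - 1 - f x) p μ ≤ 4 * eLpNorm (g - h) p μ := by
  calc eLpNorm (fun x => 2 * g x ^ 2 - 1 - f x) p μ ≤ eLpNorm ((4 : ℝ) • (g - h)) p μ := by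
        refine eLpNorm_mono_ae ?_
        filter_upwards [hf, hg, hh] with x hfx hgx hhx
        have hsum : |g x + h x| ≤ 2 := (abs_add_le _ _).trans (by linarith)
        calc ‖2 * g x ^ 2 - 1 - f x‖ = 2 * |g x - h x| * |g x + h x| := by
              rw [hfx, Real.norm_eq_abs, show 2 * g x ^ 2 - 1 - (2 * h x ^ 2 - 1) =
                2 * ((g x - h x) * (g x + h x)) by ring, abs_mul, abs_mul, abs_two, mul_assoc]
          _ ≤ 2 * |g x - h x| * 2 := by gcongr
          _ = ‖((4 : ℝ) • (g - h)) x‖ := by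
              simp only [Pi.smul_apply, Pi.sub_apply, smul_eq_mul, Real.norm_eq_abs, abs_mul]
              norm_num
              ring
    _ = 4 * eLpNorm (g - h) p μ := by
        rw [eLpNorm_const_smul]
        congr 1
        simpa using Real.enorm_natCast 4

end Lp

lemma MeasureTheory.MemLp.exists_continuous_even_eLpNorm_sub_le {μ : Measure ℝ}
    [μ.WeaklyRegular] (hneg : MeasurePreserving Neg.neg μ μ) {p : ℝ≥0∞} (hp1 : 1 ≤ p)
    (hp : p ≠ ⊤) {h : ℝ → ℝ} (hh : MemLp h p μ) (heven : h.Even) (hh1 : ∀ᵐ x ∂μ, |h x| ≤ 1)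
    {ε : ℝ≥0∞} (hε : ε ≠ 0) :
    ∃ φ : ℝ → ℝ, Continuous φ ∧ φ.Even ∧ (∀ x, |φ x| ≤ 1) ∧ eLpNorm (h - φ) p μ ≤ ε := by
  obtain ⟨φ₀, hφ₀, -⟩ := hh.exists_boundedContinuous_eLpNorm_sub_le hp hε
  set φ₁ : ℝ → ℝ := fun x => projIcc (-1) 1 (by norm_num) (φ₀ x)
  have hφ₁ : Continuous φ₁ :=
    continuous_subtype_val.comp (continuous_projIcc.comp φ₀.continuous)
  have hφ₁_mem : ∀ x, φ₁ x ∈ Icc (-1) 1 := fun x => Subtype.prop _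
  refine ⟨fun x => (2⁻¹ : ℝ) • (φ₁ x + φ₁ (-x)), by fun_prop, fun x => by simp [add_comm],
    fun x => ?_, ?_⟩
  · have h₁ := hφ₁_mem x
    have h₂ := hφ₁_mem (-x)
    rw [mem_Icc] at h₁ h₂
    show |2⁻¹ * (φ₁ x + φ₁ (-x))| ≤ 1
    rw [abs_le]
    constructor <;> linarith
  · calc eLpNorm (h - fun x => (2⁻¹ : ℝ) • (φ₁ x + φ₁ (-x))) p μ ≤ eLpNorm (h - φ₁) p μ :=
          eLpNorm_sub_symmetrize_le hp1 hneg heven hh.1 hφ₁.aestronglyMeasurable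
      _ ≤ eLpNorm (h - ⇑φ₀) p μ :=
          eLpNorm_sub_projIcc_le _ (hh1.mono fun x hx => abs_le.1 hx)
      _ ≤ ε := hφ₀

lemma measurePreserving_neg_restrict_Icc (a : ℝ) :
    MeasurePreserving Neg.neg (volume.restrict (Icc (-a) a)) (volume.restrict (Icc (-a) a)) := by
  have := (Measure.measurePreserving_neg (volume : Measure ℝ)).restrict_preimage
    (measurableSet_Icc (a := -a) (b := a))
  rwa [Set.neg_preimage, Set.neg_Icc, neg_neg] at this

theorem exists_polynomial_cos_eLpNorm_sub_le {p : ℝ≥0∞} (hp1 : 1 ≤ p) (hp : p ≠ ⊤)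
    {h : ℝ → ℝ} (hh : MemLp h p (volume.restrict (Icc (-π) π))) (heven : h.Even)
    (hh1 : ∀ᵐ x ∂volume.restrict (Icc (-π) π), |h x| ≤ 1) {ε : ℝ≥0∞} (hε : ε ≠ 0) :
    ∃ P : ℝ[X], (∀ x, |P.eval (cos x)| ≤ 1) ∧
      eLpNorm (h - fun x => P.eval (cos x)) p (volume.restrict (Icc (-π) π)) ≤ ε := by
  set μ := volume.restrict (Icc (-π) π)
  have hε2 : ε / 2 ≠ 0 := ENNReal.div_ne_zero.2 ⟨hε, ENNReal.ofNat_ne_top⟩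
  obtain ⟨φ, hφ, hφ_even, hφ1, hφ_near⟩ := hh.exists_continuous_even_eLpNorm_sub_le
    (measurePreserving_neg_restrict_Icc π) hp1 hp heven hh1 hε2
  obtain ⟨δ, hδ, hδ_near⟩ := exists_pos_eLpNorm_le_of_norm_le (μ := μ) (E := ℝ) (p := p) hε2
  obtain ⟨P, hP1, hP_near⟩ := exists_polynomial_cos_near hφ hφ_even hφ1 hδ
  have hPcos : Continuous fun x => P.eval (cos x) := by fun_prop
  refine ⟨P, hP1, ?_⟩
  calc eLpNorm (h - fun x => P.eval (cos x)) p μ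
      ≤ eLpNorm (h - φ) p μ + eLpNorm (φ - fun x => P.eval (cos x)) p μ := by
        simpa only [sub_add_sub_cancel] using eLpNorm_add_le (hh.1.sub hφ.aestronglyMeasurable)
          (hφ.aestronglyMeasurable.sub hPcos.aestronglyMeasurable) hp1
    _ ≤ ε / 2 + ε / 2 := by
        gcongr
        refine hδ_near _ ((ae_restrict_mem measurableSet_Icc).mono fun x hx => ?_)
        rw [Real.norm_eq_abs, Pi.sub_apply, abs_sub_comm]
        exact (hP_near x hx).le
    _ = ε := ENNReal.add_halves ε

/-- for any even square-integrable `f : [-π, π] → [-1, 1]` and `ε > 0`, there is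
a cosine polynomial `g(x) = a₀ + Σ_{n=1}^N a_n cos(nx)` with `|g| ≤ 1` such that
`‖2g² − 1 − f‖_{L²([-π,π])} ≤ ε`. -/
theorem stmt12 (f : ℝ → ℝ) (ε : ℝ) (hε : 0 < ε)
    (hmap : ∀ x ∈ Set.Icc (-π) π, f x ∈ Set.Icc (-1 : ℝ) 1)
    (heven : ∀ x : ℝ, f (-x) = f x)
    (hL2 : MemLp f 2 (volume.restrict (Set.Icc (-π) π))) :
    ∃ (N : ℕ) (a : ℕ → ℝ),
      (∀ x : ℝ, |a 0 + ∑ n ∈ Finset.Icc 1 N, a n * Real.cos (n * x)| ≤ 1) ∧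
      eLpNorm
          (fun x : ℝ =>
            2 * (a 0 + ∑ n ∈ Finset.Icc 1 N, a n * Real.cos (n * x)) ^ 2 - 1 - f x)
          2 (volume.restrict (Set.Icc (-π) π)) ≤ ENNReal.ofReal ε := by
  set μ := volume.restrict (Icc (-π) π)
  have hae : ∀ᵐ x ∂μ, x ∈ Icc (-π) π := ae_restrict_mem measurableSet_Icc
  set h : ℝ → ℝ := fun x => √((1 + f x) / 2)
  have hh1 : ∀ x ∈ Icc (-π) π, |h x| ≤ 1 := fun x hx => by
    rw [abs_of_nonneg (sqrt_nonneg _), sqrt_le_one]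
    linarith [(hmap x hx).2]
  have hf : ∀ x ∈ Icc (-π) π, f x = 2 * h x ^ 2 - 1 := fun x hx => by
    rw [sq_sqrt (by linarith [(hmap x hx).1])]
    ring
  have hh : MemLp h 2 μ :=
    MemLp.of_bound ((by fun_prop : Continuous fun t : ℝ => √((1 + t) / 2)).comp_aestronglyMeasurable
      hL2.1) 1 (hae.mono fun x hx => (Real.norm_eq_abs _).trans_le (hh1 x hx))
  obtain ⟨P, hP1, hP_near⟩ := exists_polynomial_cos_eLpNorm_sub_le one_le_two
    ENNReal.ofNat_ne_top hh (fun x => by simp only [h, heven]) (hae.mono hh1)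
    (ε := ENNReal.ofReal ε / 4) (by simpa)
  obtain ⟨N, a, ha⟩ :=
    exists_cos_sum_eq_of_mem_cosPolynomials (polynomial_eval_cos_mem_cosPolynomials P)
  refine ⟨N, a, fun x => ha x ▸ hP1 x, ?_⟩
  simp_rw [← ha]
  calc eLpNorm (fun x => 2 * P.eval (cos x) ^ 2 - 1 - f x) 2 μ
      ≤ 4 * eLpNorm ((fun x => P.eval (cos x)) - h) 2 μ :=
        eLpNorm_two_mul_sq_sub_one_sub_le (hae.mono hf) (ae_of_all _ hP1) (hae.mono hh1)
    _ ≤ 4 * (ENNReal.ofReal ε / 4) := by rw [eLpNorm_sub_comm]; gcongr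
    _ = ENNReal.ofReal ε := ENNReal.mul_div_cancel (by norm_num) (by norm_num)
end

section
/- Let f : [-π, π] → [-1, 1] be square-integrable and ε > 0. Then there exist N ∈ ℕ and complex coefficients c_{-N}, ..., c_N such that the trigonometric polynomial g(x) = Σ_{n=-N}^{N} c_n e^{inx} satisfies |g(x)| ≤ 1 for all x and ‖ 2|g|² − 1 − f ‖_{L²([-π,π])} ≤ ε. -/
/-!
With `h = √((1 + f) / 2)` one has `0 ≤ h ≤ 1` and `f = 2h² - 1` on `[-π, π]`, and for `‖g‖ ≤ 1`
the error `|2‖g‖² - 1 - f| = 2 |‖g‖² - h²|` is at most `4 ‖g - h‖`. So it suffices to approximate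
`h` in `L²` by trigonometric polynomials bounded by `1`. Transported to the circle `ℝ ⧸ 2πℤ`, `h`
is approximated in `L²` by a continuous function and that one uniformly by a trigonometric
polynomial (Stone–Weierstrass). Both approximants are then pushed into the unit ball by the
radial retraction `q ↦ q / max 1 ‖q‖`, which keeps trigonometric polynomials trigonometric and
at most doubles the distance to any point of the ball.
-/

open MeasureTheory Real Complex
open scoped ENNReal NNReal

section UnitBallRetraction

variable {E : Type*} [NormedAddCommGroup E] [NormedSpace ℝ E]

noncomputable def unitBallRetraction (q : E) : E := (max 1 ‖q‖)⁻¹ • q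

lemma norm_unitBallRetraction_le_one (q : E) : ‖unitBallRetraction q‖ ≤ 1 := by
  rw [unitBallRetraction, norm_smul, norm_inv, Real.norm_of_nonneg (by positivity)]
  exact inv_mul_le_one_of_le₀ (le_max_right _ _) (by positivity)

lemma norm_unitBallRetraction_sub_le {g : E} (hg : ‖g‖ ≤ 1) (q : E) :
    ‖unitBallRetraction q - g‖ ≤ 2 * ‖q - g‖ := by
  rcases le_total ‖q‖ 1 with hq | hq
  · rw [unitBallRetraction, max_eq_left hq, inv_one, one_smul]
    linarith [norm_nonneg (q - g)]
  have hshrink : ‖unitBallRetraction q - q‖ = ‖q‖ - 1 := by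
    have hq0 : ‖q‖ ≠ 0 := by linarith
    rw [unitBallRetraction, max_eq_right hq, show ‖q‖⁻¹ • q - q = (‖q‖⁻¹ - 1) • q by
      rw [sub_smul, one_smul], norm_smul,
      Real.norm_of_nonpos (by linarith [inv_le_one_of_one_le₀ hq])]
    field_simp
    ring
  calc ‖unitBallRetraction q - g‖ ≤ ‖unitBallRetraction q - q‖ + ‖q - g‖ :=
        norm_sub_le_norm_sub_add_norm_sub _ _ _
    _ ≤ 2 * ‖q - g‖ := by rw [hshrink]; linarith [norm_sub_norm_le q g]

lemma continuous_unitBallRetraction : Continuous (unitBallRetraction : E → E) :=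
  ((continuous_const.max continuous_norm).inv₀ fun _ => by positivity).smul continuous_id

end UnitBallRetraction

theorem MeasureTheory.MemLp.exists_continuous_norm_le_one_eLpNorm_sub_le {α E : Type*}
    [TopologicalSpace α] [NormalSpace α] [MeasurableSpace α] [BorelSpace α]
    [NormedAddCommGroup E] [NormedSpace ℝ E] {μ : Measure α} [μ.WeaklyRegular] {p : ℝ≥0∞}
    (hp : p ≠ ∞) {F : α → E} (hF : MemLp F p μ) (hF1 : ∀ᵐ x ∂μ, ‖F x‖ ≤ 1) {δ : ℝ≥0∞}
    (hδ : δ ≠ 0) :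
    ∃ G : α → E, Continuous G ∧ (∀ x, ‖G x‖ ≤ 1) ∧ eLpNorm (F - G) p μ ≤ δ := by
  obtain ⟨G, hFG, -⟩ := hF.exists_boundedContinuous_eLpNorm_sub_le hp (ENNReal.half_pos hδ).ne'
  refine ⟨unitBallRetraction ∘ G, continuous_unitBallRetraction.comp G.continuous,
    fun x => norm_unitBallRetraction_le_one _, ?_⟩
  have hpointwise : ∀ᵐ x ∂μ, ‖F x - unitBallRetraction (G x)‖ ≤ 2 * ‖F x - G x‖ :=
    hF1.mono fun x hx => by
      rw [norm_sub_rev, norm_sub_rev (F x)]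
      exact norm_unitBallRetraction_sub_le hx _
  calc eLpNorm (F - unitBallRetraction ∘ G) p μ ≤ ENNReal.ofReal 2 * eLpNorm (F - ⇑G) p μ :=
        eLpNorm_le_mul_eLpNorm_of_ae_le_mul hpointwise p
    _ ≤ 2 * (δ / 2) := by rw [ENNReal.ofReal_ofNat]; gcongr
    _ = δ := ENNReal.mul_div_cancel two_ne_zero ENNReal.ofNat_ne_top

section AddCircle

variable {T : ℝ} [Fact (0 < T)]

theorem exists_mem_span_fourier_norm_le_one_eLpNorm_sub_le {p : ℝ≥0∞} (hp1 : 1 ≤ p) (hp : p ≠ ∞)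
    {F : AddCircle T → ℂ} (hF : MemLp F p) (hF1 : ∀ᵐ x, ‖F x‖ ≤ 1) {δ : ℝ≥0∞} (hδ : δ ≠ 0) :
    ∃ P ∈ Submodule.span ℂ (Set.range (fourier (T := T))), ‖P‖ ≤ 1 ∧
      eLpNorm (F - ⇑P) p volume ≤ δ := by
  obtain ⟨G, hGcont, hG1, hFG⟩ :=
    hF.exists_continuous_norm_le_one_eLpNorm_sub_le hp hF1 (ENNReal.half_pos hδ).ne'
  set C := (volume : Measure (AddCircle T)) Set.univ ^ p.toReal⁻¹
  obtain ⟨η, hη, hηC⟩ : ∃ η : ℝ≥0, η > 0 ∧ (η : ℝ≥0∞) * C < δ / 2 :=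
    ENNReal.exists_nnreal_pos_mul_lt (ENNReal.rpow_ne_top_of_nonneg (by positivity)
      (measure_ne_top _ _)) (ENNReal.half_pos hδ).ne'
  let G' : C(AddCircle T, ℂ) := ⟨G, hGcont⟩
  have hG' : ‖G'‖ ≤ 1 := (ContinuousMap.norm_le _ zero_le_one).2 hG1
  have hdense : G' ∈ closure (Submodule.span ℂ (Set.range (fourier (T := T))) :
      Set C(AddCircle T, ℂ)) := by
    rw [← Submodule.topologicalClosure_coe, span_fourier_closure_eq_top]
    trivial
  obtain ⟨Q, hQ, hGQ⟩ := Metric.mem_closure_iff.1 hdense (η / 2) (by positivity)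
  refine ⟨unitBallRetraction Q, Submodule.smul_of_tower_mem _ _ hQ,
    norm_unitBallRetraction_le_one Q, ?_⟩
  have hPG : ‖unitBallRetraction Q - G'‖ ≤ η := by
    have := norm_unitBallRetraction_sub_le hG' Q
    rw [← dist_eq_norm Q, dist_comm] at this
    linarith
  have hGP : eLpNorm (G - ⇑(unitBallRetraction Q)) p volume ≤ δ / 2 := by
    refine (eLpNorm_le_of_ae_bound (C := η) (ae_of_all _ fun x => ?_)).trans ?_
    · rw [Pi.sub_apply, norm_sub_rev]
      exact (ContinuousMap.norm_coe_le_norm (unitBallRetraction Q - G') x).trans hPG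
    · rw [mul_comm, ENNReal.ofReal_coe_nnreal]
      exact hηC.le
  calc eLpNorm (F - ⇑(unitBallRetraction Q)) p volume
      ≤ eLpNorm (F - G) p volume + eLpNorm (G - ⇑(unitBallRetraction Q)) p volume := by
        rw [← sub_add_sub_cancel F G]
        exact eLpNorm_add_le (hF.aestronglyMeasurable.sub hGcont.aestronglyMeasurable)
          (hGcont.sub (ContinuousMap.continuous _)).aestronglyMeasurable hp1
    _ ≤ δ / 2 + δ / 2 := add_le_add hFG hGP
    _ = δ := ENNReal.add_halves δ

end AddCircle

theorem AddCircle.aestronglyMeasurable_liftIoc {T : ℝ} [Fact (0 < T)] {t : ℝ} {E : Type*}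
    [TopologicalSpace E] {f : ℝ → E}
    (hf : AEStronglyMeasurable f (volume.restrict (Set.Ioc t (t + T)))) :
    AEStronglyMeasurable (AddCircle.liftIoc T t f) volume := by
  rw [← map_comap_subtype_coe measurableSet_Ioc,
    (MeasurableEmbedding.subtype_coe measurableSet_Ioc).aestronglyMeasurable_map_iff] at hf
  exact hf.comp_measurePreserving (AddCircle.measurePreserving_equivIoc T)

noncomputable def fourierSum (N : ℕ) (c : ℤ → ℂ) (x : ℝ) : ℂ :=
  ∑ n ∈ Finset.Icc (-(N : ℤ)) N, c n * Complex.exp (Complex.I * n * x)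

theorem fourier_coe_apply_two_pi (n : ℤ) (x : ℝ) :
    fourier n (x : AddCircle (2 * π)) = Complex.exp (Complex.I * n * x) := by
  rw [fourier_coe_apply]
  congr 1
  field_simp
  push_cast
  ring

theorem exists_fourierSum_eq_of_mem_span {P : C(AddCircle (2 * π), ℂ)}
    (hP : P ∈ Submodule.span ℂ (Set.range (fourier (T := 2 * π)))) :
    ∃ N c, ∀ x : ℝ, fourierSum N c x = P x := by
  obtain ⟨a, rfl⟩ := Finsupp.mem_span_range_iff_exists_finsupp.1 hP
  set N := a.support.sup Int.natAbs
  refine ⟨N, a, fun x => ?_⟩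
  have hsupp : a.support ⊆ Finset.Icc (-(N : ℤ)) N := by
    intro n hn
    have : |n| ≤ N := by
      rw [← Int.natCast_natAbs]; exact_mod_cast Finset.le_sup hn
    exact Finset.mem_Icc.2 (abs_le.1 this)
  simp only [fourierSum, Finsupp.sum, ContinuousMap.coe_sum, ContinuousMap.coe_smul,
    Finset.sum_apply, Pi.smul_apply, smul_eq_mul, fourier_coe_apply_two_pi]
  exact (Finset.sum_subset hsupp fun n _ hn => by
    rw [Finsupp.notMem_support_iff.1 hn, zero_mul]).symm

theorem exists_fourierSum_norm_le_one_eLpNorm_sub_le {p : ℝ≥0∞} (hp1 : 1 ≤ p) (hp : p ≠ ∞)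
    {h : ℝ → ℂ} (hmeas : AEStronglyMeasurable h (volume.restrict (Set.Icc (-π) π)))
    (h1 : ∀ x ∈ Set.Icc (-π) π, ‖h x‖ ≤ 1) {δ : ℝ≥0∞} (hδ : δ ≠ 0) :
    ∃ N c, (∀ x, ‖fourierSum N c x‖ ≤ 1) ∧
      eLpNorm (fun x => fourierSum N c x - h x) p (volume.restrict (Set.Icc (-π) π)) ≤ δ := by
  have : Fact (0 < 2 * π) := ⟨two_pi_pos⟩
  have hIoc : Set.Ioc (-π) (-π + 2 * π) = Set.Ioc (-π) π := by ring_nf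
  have hmk := AddCircle.measurePreserving_mk (2 * π) (-π)
  rw [hIoc] at hmk
  set H := AddCircle.liftIoc (2 * π) (-π) h
  have hH1 (z : AddCircle (2 * π)) : ‖H z‖ ≤ 1 := by
    have hz : ((AddCircle.equivIoc (2 * π) (-π) z) : ℝ) ∈ Set.Ioc (-π) π :=
      hIoc ▸ (AddCircle.equivIoc (2 * π) (-π) z).2
    exact h1 _ (Set.Ioc_subset_Icc_self hz)
  have hHmeas : AEStronglyMeasurable H volume := by
    refine AddCircle.aestronglyMeasurable_liftIoc (hmeas.mono_measure ?_)
    rw [hIoc]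
    exact Measure.restrict_mono Set.Ioc_subset_Icc_self le_rfl
  obtain ⟨P, hPspan, hP1, hHP⟩ := exists_mem_span_fourier_norm_le_one_eLpNorm_sub_le hp1 hp
    (MemLp.of_bound hHmeas 1 (ae_of_all _ hH1)) (ae_of_all _ hH1) hδ
  obtain ⟨N, c, hNc⟩ := exists_fourierSum_eq_of_mem_span hPspan
  refine ⟨N, c, fun x => hNc x ▸ (P.norm_coe_le_norm _).trans hP1, ?_⟩
  calc eLpNorm (fun x => fourierSum N c x - h x) p (volume.restrict (Set.Icc (-π) π))
      = eLpNorm ((⇑P - H) ∘ (↑)) p (volume.restrict (Set.Ioc (-π) π)) := by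
        rw [← Measure.restrict_congr_set Ioc_ae_eq_Icc]
        refine eLpNorm_congr_ae <| ae_restrict_of_forall_mem measurableSet_Ioc fun x hx => ?_
        simp only [Function.comp_apply, Pi.sub_apply, hNc, H,
          AddCircle.liftIoc_coe_apply (hIoc ▸ hx : x ∈ Set.Ioc (-π) (-π + 2 * π))]
    _ = eLpNorm (H - ⇑P) p volume := by
        rw [eLpNorm_comp_measurePreserving (P.continuous.aestronglyMeasurable.sub hHmeas) hmk,
          eLpNorm_sub_comm]
    _ ≤ δ := hHP

theorem abs_norm_sq_sub_norm_sq_le {E : Type*} [SeminormedAddCommGroup E] {z w : E}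
    (hz : ‖z‖ ≤ 1) (hw : ‖w‖ ≤ 1) : |‖z‖ ^ 2 - ‖w‖ ^ 2| ≤ 2 * ‖z - w‖ := by
  rw [sq_sub_sq, abs_mul, abs_of_nonneg (by positivity)]
  exact mul_le_mul (by linarith) (abs_norm_sub_norm_le z w) (abs_nonneg _) zero_le_two

/-- for any square-integrable `f : [-π, π] → [-1, 1]` and `ε > 0`, there is a
trigonometric polynomial `g(x) = Σ_{n=-N}^N c_n e^{inx}` with `|g| ≤ 1` such that
`‖2|g|² − 1 − f‖_{L²([-π,π])} ≤ ε`. -/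
theorem stmt13 (f : ℝ → ℝ) (ε : ℝ) (hε : 0 < ε)
    (hmap : ∀ x ∈ Set.Icc (-π) π, f x ∈ Set.Icc (-1 : ℝ) 1)
    (hL2 : MemLp f 2 (volume.restrict (Set.Icc (-π) π))) :
    ∃ (N : ℕ) (c : ℤ → ℂ),
      (∀ x : ℝ, ‖∑ n ∈ Finset.Icc (-(N : ℤ)) (N : ℤ),
          c n * Complex.exp (Complex.I * (n : ℂ) * (x : ℂ))‖ ≤ 1) ∧
      eLpNorm
          (fun x : ℝ =>
            2 * ‖∑ n ∈ Finset.Icc (-(N : ℤ)) (N : ℤ),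
                c n * Complex.exp (Complex.I * (n : ℂ) * (x : ℂ))‖ ^ 2 - 1 - f x)
          2 (volume.restrict (Set.Icc (-π) π)) ≤ ENNReal.ofReal ε := by
  set h : ℝ → ℂ := fun x => (√((1 + f x) / 2) : ℝ)
  have hh (x : ℝ) (hx : x ∈ Set.Icc (-π) π) : ‖h x‖ ≤ 1 ∧ 2 * ‖h x‖ ^ 2 - 1 = f x := by
    obtain ⟨hf0, hf1⟩ := hmap x hx
    rw [Complex.norm_real, Real.norm_of_nonneg (Real.sqrt_nonneg _),
      Real.sq_sqrt (by linarith)]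
    exact ⟨Real.sqrt_le_one.2 (by linarith), by ring⟩
  have hmeas : AEStronglyMeasurable h (volume.restrict (Set.Icc (-π) π)) :=
    (by fun_prop : Continuous fun t : ℝ => ((√((1 + t) / 2) : ℝ) : ℂ)).comp_aestronglyMeasurable
      hL2.aestronglyMeasurable
  obtain ⟨N, c, hg1, hgh⟩ := exists_fourierSum_norm_le_one_eLpNorm_sub_le one_le_two
    ENNReal.ofNat_ne_top hmeas (fun x hx => (hh x hx).1) (δ := ENNReal.ofReal (ε / 4))
    (by positivity)
  refine ⟨N, c, hg1, ?_⟩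
  have hpointwise : ∀ᵐ x ∂volume.restrict (Set.Icc (-π) π),
      ‖2 * ‖fourierSum N c x‖ ^ 2 - 1 - f x‖ ≤ 4 * ‖fourierSum N c x - h x‖ :=
    ae_restrict_of_forall_mem measurableSet_Icc fun x hx => calc
      _ = 2 * |‖fourierSum N c x‖ ^ 2 - ‖h x‖ ^ 2| := by
        rw [← (hh x hx).2, Real.norm_eq_abs, ← abs_two, ← abs_mul]
        congr 1
        ring
      _ ≤ 4 * ‖fourierSum N c x - h x‖ := by
        linarith [abs_norm_sq_sub_norm_sq_le (hg1 x) (hh x hx).1]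
  calc _ ≤ ENNReal.ofReal 4 * eLpNorm (fun x => fourierSum N c x - h x) 2 _ :=
        eLpNorm_le_mul_eLpNorm_of_ae_le_mul hpointwise 2
    _ ≤ ENNReal.ofReal 4 * ENNReal.ofReal (ε / 4) := by gcongr
    _ = ENNReal.ofReal ε := by rw [← ENNReal.ofReal_mul zero_le_four]; ring_nf
end
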